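/- arXiv:1007.0773 — 7 statements merged into one kernel-verified Lean document; each statement's English description precedes it below -/
import Mathlib

section
/- Let Ω ⊂ ℝⁿ be a compact convex set with nonempty interior, let g : ∂Ω → ℝ be continuous, let u be the convex envelope of the boundary data g, let x₀ be a point in the interior of Ω, let P be a supporting plane of u at x₀, and let C^{x₀} = {y ∈ Ω : u(y) = P(y)} be the contact set. Then C^{x₀} ∩ ∂Ω is nonempty, i.e., the contact set intersects the boundary of Ω. -/
theorem contact_set_meets_boundary (n : ℕ) (hn : 1 ≤ n)
    (Ω : Set (EuclideanSpace ℝ (Fin n)))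
    (hΩc : IsCompact Ω) (hΩconv : Convex ℝ Ω) (hΩint : (interior Ω).Nonempty)
    (g : EuclideanSpace ℝ (Fin n) → ℝ) (hg : ContinuousOn g (frontier Ω))
    (u : EuclideanSpace ℝ (Fin n) → ℝ)
    (hu : ∀ x ∈ Ω, u x = sSup {r : ℝ | ∃ (A : EuclideanSpace ℝ (Fin n)) (b : ℝ),
      (∀ y ∈ frontier Ω, (inner ℝ A y : ℝ) + b ≤ g y) ∧ r = (inner ℝ A x : ℝ) + b})
    (x₀ : EuclideanSpace ℝ (Fin n)) (hx₀ : x₀ ∈ interior Ω)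
    (P : EuclideanSpace ℝ (Fin n) → ℝ)
    (hPaff : ∃ (A : EuclideanSpace ℝ (Fin n)) (b : ℝ),
      ∀ x, P x = (inner ℝ A x : ℝ) + b)
    (hPle : ∀ y ∈ Ω, P y ≤ u y) (hPeq : P x₀ = u x₀) :
    ({y | y ∈ Ω ∧ u y = P y} ∩ frontier Ω).Nonempty := by
  haveI : Nonempty (Fin n) := ⟨⟨0, hn⟩⟩
  have hx₀Ω : x₀ ∈ Ω := interior_subset hx₀
  have hfr : frontier Ω ⊆ Ω := hΩc.isClosed.frontier_subset
  have hfc : IsCompact (frontier Ω) :=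
    hΩc.of_isClosed_subset isClosed_frontier hfr
  -- frontier nonempty
  have hfne : (frontier Ω).Nonempty := by
    rw [Set.nonempty_iff_ne_empty]
    intro h
    have hclopen : IsClopen Ω := isClopen_iff_frontier_eq_empty.mpr h
    rcases isClopen_iff.mp hclopen with h1 | h1
    · rw [h1] at hΩint; simp at hΩint
    · rw [h1] at hΩc
      exact (NoncompactSpace.noncompact_univ (X := EuclideanSpace ℝ (Fin n))) hΩc
  obtain ⟨A, b, hPab⟩ := hPaff
  -- u z ≤ g z on frontier; the competitor set at frontier points is bounded by g z
  -- nonemptiness of competitor sets: constant = min of g on frontier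
  obtain ⟨c, hcmem, hcmin⟩ := hfc.exists_isMinOn hfne hg
  have hconst : ∀ y ∈ frontier Ω, (inner ℝ (0 : EuclideanSpace ℝ (Fin n)) y : ℝ) + g c ≤ g y := by
    intro y hy
    simp only [inner_zero_left, zero_add]
    exact hcmin hy
  have hSne : ∀ x : EuclideanSpace ℝ (Fin n),
      {r : ℝ | ∃ (A' : EuclideanSpace ℝ (Fin n)) (b' : ℝ),
        (∀ y ∈ frontier Ω, (inner ℝ A' y : ℝ) + b' ≤ g y) ∧ r = (inner ℝ A' x : ℝ) + b'}.Nonempty := by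
    intro x
    exact ⟨(inner ℝ (0 : EuclideanSpace ℝ (Fin n)) x : ℝ) + g c, 0, g c, hconst, rfl⟩
  -- u z ≤ g z for z on frontier
  have hule : ∀ z ∈ frontier Ω, u z ≤ g z := by
    intro z hz
    rw [hu z (hfr hz)]
    apply csSup_le (hSne z)
    rintro r ⟨A', b', hcomp, rfl⟩
    exact hcomp z hz
  -- bounded above at x₀
  obtain ⟨w, hwmem, hwmax⟩ := hfc.exists_isMaxOn hfne hg
  have hbdd : BddAbove {r : ℝ | ∃ (A' : EuclideanSpace ℝ (Fin n)) (b' : ℝ),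
      (∀ y ∈ frontier Ω, (inner ℝ A' y : ℝ) + b' ≤ g y) ∧ r = (inner ℝ A' x₀ : ℝ) + b'} := by
    refine ⟨g w, ?_⟩
    rintro r ⟨A', b', hcomp, rfl⟩
    by_cases hA : A' = 0
    · subst hA
      have h1 := hcomp w hwmem
      simpa using h1
    -- find a frontier point m with inner A' x₀ ≤ inner A' m
    have hcont : Continuous fun x : EuclideanSpace ℝ (Fin n) => (inner ℝ A' x : ℝ) :=
      continuous_const.inner continuous_id
    obtain ⟨m, hmΩ, hmmax⟩ := hΩc.exists_isMaxOn ⟨x₀, hx₀Ω⟩ hcont.continuousOn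
    have hAn : 0 < ‖A'‖ := norm_pos_iff.mpr hA
    have hmfr : m ∈ frontier Ω := by
      rw [hΩc.isClosed.frontier_eq]
      refine ⟨hmΩ, fun hmint => ?_⟩
      obtain ⟨δ, hδ, hball⟩ := Metric.isOpen_iff.mp isOpen_interior m hmint
      set t : ℝ := δ / (2 * ‖A'‖) with ht
      have htpos : 0 < t := by positivity
      have htn : t * ‖A'‖ = δ / 2 := by
        rw [ht]; field_simp
      have hmem : m + t • A' ∈ Ω := by
        apply interior_subset
        apply hball
        rw [Metric.mem_ball, dist_eq_norm]
        have h2 : m + t • A' - m = t • A' := by abel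
        rw [h2, norm_smul, Real.norm_eq_abs, abs_of_pos htpos, htn]
        linarith
      have h3 := hmmax hmem
      simp only [Set.mem_setOf_eq] at h3
      have hiner : (inner ℝ A' (m + t • A') : ℝ) = (inner ℝ A' m : ℝ) + t * ‖A'‖ ^ 2 := by
        rw [inner_add_right, real_inner_smul_right, real_inner_self_eq_norm_sq]
      rw [hiner] at h3
      have h4 : 0 < t * ‖A'‖ ^ 2 := mul_pos htpos (pow_pos hAn 2)
      linarith
    calc (inner ℝ A' x₀ : ℝ) + b' ≤ (inner ℝ A' m : ℝ) + b' := by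
          have := hmmax hx₀Ω; simpa using add_le_add_right this b'
      _ ≤ g m := hcomp m hmfr
      _ ≤ g w := hwmax hmfr
  -- main argument
  by_contra hcon
  rw [Set.not_nonempty_iff_eq_empty] at hcon
  have hlt : ∀ z ∈ frontier Ω, P z < g z := by
    intro z hz
    have h1 : P z ≤ u z := hPle z (hfr hz)
    have h2 : u z ≠ P z := by
      intro h
      have : z ∈ ({y | y ∈ Ω ∧ u y = P y} ∩ frontier Ω) := ⟨⟨hfr hz, h⟩, hz⟩
      rw [hcon] at this
      exact this
    exact lt_of_lt_of_le (lt_of_le_of_ne h1 (Ne.symm h2)) (hule z hz)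
  -- min of g - P on frontier
  have hPcont : Continuous P := by
    have : P = fun x => (inner ℝ A x : ℝ) + b := funext hPab
    rw [this]
    exact (continuous_const.inner continuous_id).add continuous_const
  obtain ⟨z₀, hz₀, hz₀min⟩ := hfc.exists_isMinOn hfne (hg.sub hPcont.continuousOn)
  set ε : ℝ := g z₀ - P z₀ with hε
  have hεpos : 0 < ε := sub_pos.mpr (hlt z₀ hz₀)
  have hcomp : ∀ y ∈ frontier Ω, (inner ℝ A y : ℝ) + (b + ε) ≤ g y := by
    intro y hy
    have hmi := hz₀min hy
    simp only [Set.mem_setOf_eq, Pi.sub_apply] at hmi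
    have hPy : P y = (inner ℝ A y : ℝ) + b := hPab y
    have hεle : ε ≤ g y - P y := by rw [hε]; exact hmi
    linarith
  have hmem : P x₀ + ε ∈ {r : ℝ | ∃ (A' : EuclideanSpace ℝ (Fin n)) (b' : ℝ),
      (∀ y ∈ frontier Ω, (inner ℝ A' y : ℝ) + b' ≤ g y) ∧ r = (inner ℝ A' x₀ : ℝ) + b'} :=
    ⟨A, b + ε, hcomp, by rw [hPab x₀]; ring⟩
  have : P x₀ + ε ≤ u x₀ := by
    rw [hu x₀ hx₀Ω]
    exact le_csSup hbdd hmem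
  rw [← hPeq] at this
  linarith
end

section
/- Let Ω ⊂ ℝⁿ be a compact convex set with nonempty interior, let g : ∂Ω → ℝ be continuous, let u be the convex envelope of the boundary data g, let x₀ be a point in the interior of Ω, let P be a supporting plane of u at x₀, and let C^{x₀} = {y ∈ Ω : u(y) = P(y)} be the contact set. Then there exists a point y ∈ ∂Ω such that the line segment [x₀, y] is contained in C^{x₀}; in particular, u coincides with the affine function P (hence is affine) on a segment joining x₀ to the boundary of Ω. -/
lemma aux_sum_pad {M : Type*} [AddCommMonoid M] {k N : ℕ} (hkN : k ≤ N) (f : Fin k → M) :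
    ∑ j : Fin N, (if h : (j : ℕ) < k then f ⟨j, h⟩ else 0) = ∑ i : Fin k, f i := by
  set g : ℕ → M := fun j => if h : j < k then f ⟨j, h⟩ else 0 with hg
  have e1 : ∑ j : Fin N, (if h : (j : ℕ) < k then f ⟨j, h⟩ else 0) = ∑ j ∈ Finset.range N, g j :=
    Fin.sum_univ_eq_sum_range g N
  have e2 : ∑ i : Fin k, f i = ∑ j ∈ Finset.range k, g j := by
    rw [← Fin.sum_univ_eq_sum_range g k]
    refine Finset.sum_congr rfl fun i _ => ?_
    rw [hg]
    simp [i.isLt]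
  rw [e1, e2, ← Finset.sum_range_add_sum_Ico _ hkN]
  have h2 : ∀ j ∈ Finset.Ico k N, g j = 0 := fun j hj =>
    dif_neg (not_lt.mpr (Finset.mem_Ico.mp hj).1)
  rw [Finset.sum_congr rfl h2, Finset.sum_const_zero, add_zero]

lemma aux_isCompact_convexHull {E : Type*} [NormedAddCommGroup E] [NormedSpace ℝ E]
    [FiniteDimensional ℝ E] {s : Set E} (hs : IsCompact s) :
    IsCompact (convexHull ℝ s) := by
  rcases s.eq_empty_or_nonempty with rfl | ⟨p₀, hp₀⟩
  · simp only [convexHull_empty]; exact isCompact_empty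
  set N := Module.finrank ℝ E + 1 with hN
  let F : (Fin N → ℝ) × (Fin N → E) → E := fun p => ∑ i, p.1 i • p.2 i
  have hF : Continuous F := by
    apply continuous_finset_sum
    intro i _
    exact ((continuous_apply i).comp continuous_fst).smul
      ((continuous_apply i).comp continuous_snd)
  have hT : IsCompact ((stdSimplex ℝ (Fin N)) ×ˢ (Set.univ.pi fun _ : Fin N => s)) :=
    (isCompact_stdSimplex ℝ _).prod (isCompact_univ_pi fun _ => hs)
  have himg : convexHull ℝ s
      = F '' ((stdSimplex ℝ (Fin N)) ×ˢ (Set.univ.pi fun _ : Fin N => s)) := by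
    apply Set.Subset.antisymm
    · intro x hx
      obtain ⟨ι, hfin, z, w, hzs, hai, hw0, hw1, hwz⟩ :=
        eq_pos_convex_span_of_mem_convexHull hx
      letI := hfin
      haveI : Nonempty ι := by
        by_contra h
        rw [not_nonempty_iff] at h
        rw [Finset.sum_eq_zero (fun i _ => (h.false i).elim)] at hw1
        norm_num at hw1
      have hcard : Fintype.card ι ≤ N := by
        rw [← hai.finrank_vectorSpan_add_one]
        exact Nat.add_le_add_right (Submodule.finrank_le _) 1
      set k := Fintype.card ι with hk
      let q := Fintype.equivFin ι
      let w' : Fin N → ℝ := fun j => if h : (j : ℕ) < k then w (q.symm ⟨j, h⟩) else 0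
      let z' : Fin N → E := fun j => if h : (j : ℕ) < k then z (q.symm ⟨j, h⟩) else p₀
      refine ⟨(w', z'), ⟨⟨fun j => ?_, ?_⟩, fun j _ => ?_⟩, ?_⟩
      · by_cases h : (j : ℕ) < k
        · simp only [w', dif_pos h]; exact (hw0 _).le
        · simp only [w', dif_neg h]; exact le_rfl
      · have := aux_sum_pad hcard (fun i : Fin k => w (q.symm i))
        simp only [w']
        rw [this, Equiv.sum_comp q.symm (fun i => w i)]
        exact hw1
      · by_cases h : (j : ℕ) < k
        · simp only [z', dif_pos h]; exact hzs (Set.mem_range_self _)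
        · simp only [z', dif_neg h]; exact hp₀
      · have key : ∀ j : Fin N, w' j • z' j
            = (if h : (j : ℕ) < k then w (q.symm ⟨j, h⟩) • z (q.symm ⟨j, h⟩) else 0) := by
          intro j
          by_cases h : (j : ℕ) < k
          · simp only [w', z', dif_pos h]
          · simp only [w', z', dif_neg h, zero_smul]
        show ∑ j, w' j • z' j = x
        rw [Finset.sum_congr rfl (fun j _ => key j),
          aux_sum_pad hcard (fun i : Fin k => w (q.symm i) • z (q.symm i)),
          Equiv.sum_comp q.symm (fun i => w i • z i)]
        exact hwz
    · rintro x ⟨⟨w, y⟩, ⟨⟨hw0, hw1⟩, hy⟩, rfl⟩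
      exact (convex_convexHull ℝ s).sum_mem (fun i _ => hw0 i) hw1
        (fun i _ => subset_convexHull ℝ s (hy i (Set.mem_univ i)))
  rw [himg]
  exact hT.image hF



lemma aux_frontier_nonempty {n : ℕ} (hn : 1 ≤ n) {Ω : Set (EuclideanSpace ℝ (Fin n))}
    (hΩc : IsCompact Ω) (hΩint : (interior Ω).Nonempty) : (frontier Ω).Nonempty := by
  haveI : Nontrivial (EuclideanSpace ℝ (Fin n)) := by
    have h0 : 0 < Module.finrank ℝ (EuclideanSpace ℝ (Fin n)) := by
      rw [finrank_euclideanSpace_fin]; omega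
    exact Module.nontrivial_of_finrank_pos h0
  by_contra h
  rw [Set.not_nonempty_iff_eq_empty] at h
  have hclopen : IsClopen Ω := isClopen_iff_frontier_eq_empty.mpr h
  rcases (isClopen_iff.mp hclopen) with rfl | rfl
  · simp at hΩint
  · exact (NoncompactSpace.noncompact_univ (X := EuclideanSpace ℝ (Fin n))) hΩc

lemma aux_extreme_not_interior {n : ℕ} (hn : 1 ≤ n) {Ω : Set (EuclideanSpace ℝ (Fin n))}
    {x : EuclideanSpace ℝ (Fin n)} (hx : x ∈ Set.extremePoints ℝ Ω) : x ∉ interior Ω := by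
  haveI : Nontrivial (EuclideanSpace ℝ (Fin n)) := by
    have h0 : 0 < Module.finrank ℝ (EuclideanSpace ℝ (Fin n)) := by
      rw [finrank_euclideanSpace_fin]; omega
    exact Module.nontrivial_of_finrank_pos h0
  intro hxint
  rw [mem_interior_iff_mem_nhds, Metric.mem_nhds_iff] at hxint
  obtain ⟨ε, hε, hball⟩ := hxint
  obtain ⟨v, hv⟩ := exists_ne (0 : EuclideanSpace ℝ (Fin n))
  set d : EuclideanSpace ℝ (Fin n) := (ε / (2 * ‖v‖)) • v with hd
  have hnv : 0 < ‖v‖ := norm_pos_iff.mpr hv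
  have hdnorm : ‖d‖ = ε / 2 := by
    rw [hd, norm_smul, Real.norm_eq_abs, abs_of_pos (by positivity)]
    field_simp
  have hdne : d ≠ 0 := by
    intro h0
    rw [h0, norm_zero] at hdnorm
    linarith
  have h1 : x + d ∈ Ω := hball (by
    simp [Metric.mem_ball, dist_eq_norm, hdnorm]; linarith)
  have h2 : x - d ∈ Ω := hball (by
    simp only [Metric.mem_ball, dist_eq_norm]
    rw [show x - d - x = -d by abel, norm_neg, hdnorm]; linarith)
  obtain ⟨-, hext⟩ := hx
  have hseg : x ∈ openSegment ℝ (x - d) (x + d) := by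
    refine ⟨1/2, 1/2, by norm_num, by norm_num, by norm_num, ?_⟩
    rw [smul_sub, smul_add]
    module
  have hxd : x - d = x := hext h2 h1 hseg
  exact hdne (by simpa [sub_eq_self] using hxd)

lemma aux_subset_hull_frontier {n : ℕ} (hn : 1 ≤ n) {Ω : Set (EuclideanSpace ℝ (Fin n))}
    (hΩc : IsCompact Ω) (hΩconv : Convex ℝ Ω) :
    Ω ⊆ convexHull ℝ (frontier Ω) := by
  have hfsub : frontier Ω ⊆ Ω := hΩc.isClosed.frontier_subset
  have hfc : IsCompact (frontier Ω) := hΩc.of_isClosed_subset isClosed_frontier hfsub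
  have hKcl : IsClosed (convexHull ℝ (frontier Ω)) := (aux_isCompact_convexHull hfc).isClosed
  have hext : Set.extremePoints ℝ Ω ⊆ frontier Ω := by
    intro x hx
    rw [frontier, hΩc.isClosed.closure_eq]
    exact ⟨hx.1, aux_extreme_not_interior hn hx⟩
  calc Ω = closure (convexHull ℝ (Set.extremePoints ℝ Ω)) :=
        (closure_convexHull_extremePoints hΩc hΩconv).symm
    _ ⊆ closure (convexHull ℝ (frontier Ω)) := closure_mono (convexHull_mono hext)
    _ = convexHull ℝ (frontier Ω) := hKcl.closure_eq

theorem contact_set_contains_segment_to_boundary (n : ℕ) (hn : 1 ≤ n)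
    (Ω : Set (EuclideanSpace ℝ (Fin n)))
    (hΩc : IsCompact Ω) (hΩconv : Convex ℝ Ω) (hΩint : (interior Ω).Nonempty)
    (g : EuclideanSpace ℝ (Fin n) → ℝ) (hg : ContinuousOn g (frontier Ω))
    (u : EuclideanSpace ℝ (Fin n) → ℝ)
    (hu : ∀ x ∈ Ω, u x = sSup {r : ℝ | ∃ (A : EuclideanSpace ℝ (Fin n)) (b : ℝ),
      (∀ y ∈ frontier Ω, (inner ℝ A y : ℝ) + b ≤ g y) ∧ r = (inner ℝ A x : ℝ) + b})
    (x₀ : EuclideanSpace ℝ (Fin n)) (hx₀ : x₀ ∈ interior Ω)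
    (P : EuclideanSpace ℝ (Fin n) → ℝ)
    (hPaff : ∃ (A : EuclideanSpace ℝ (Fin n)) (b : ℝ),
      ∀ x, P x = (inner ℝ A x : ℝ) + b)
    (hPle : ∀ y ∈ Ω, P y ≤ u y) (hPeq : P x₀ = u x₀) :
    ∃ y ∈ frontier Ω, segment ℝ x₀ y ⊆ {z | z ∈ Ω ∧ u z = P z} := by
  set S : (EuclideanSpace ℝ (Fin n)) → Set ℝ := fun x => {r : ℝ | ∃ (A : (EuclideanSpace ℝ (Fin n))) (b : ℝ),
      (∀ y ∈ frontier Ω, (inner ℝ A y : ℝ) + b ≤ g y) ∧ r = (inner ℝ A x : ℝ) + b} with hS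
  have hfsub : frontier Ω ⊆ Ω := hΩc.isClosed.frontier_subset
  have hfc : IsCompact (frontier Ω) := hΩc.of_isClosed_subset isClosed_frontier hfsub
  have hfne : (frontier Ω).Nonempty := aux_frontier_nonempty hn hΩc hΩint
  have hx₀Ω : x₀ ∈ Ω := interior_subset hx₀
  obtain ⟨ylo, hylo, hglo⟩ := hfc.exists_isMinOn hfne hg
  obtain ⟨yhi, hyhi, hghi⟩ := hfc.exists_isMaxOn hfne hg
  have hSne : ∀ x : (EuclideanSpace ℝ (Fin n)), (S x).Nonempty := by
    intro x
    refine ⟨(inner ℝ (0 : (EuclideanSpace ℝ (Fin n))) x : ℝ) + g ylo, 0, g ylo, fun y hy => ?_, rfl⟩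
    rw [inner_zero_left]
    simpa using hglo hy
  have hΩhull : Ω ⊆ convexHull ℝ (frontier Ω) := aux_subset_hull_frontier hn hΩc hΩconv
  have hSbdd : ∀ x ∈ Ω, BddAbove (S x) := by
    intro x hx
    refine ⟨g yhi, ?_⟩
    rintro r ⟨A, b, hAb, rfl⟩
    have hlin : IsLinearMap ℝ (fun z : (EuclideanSpace ℝ (Fin n)) => (inner ℝ A z : ℝ)) :=
      ⟨fun z w => inner_add_right A z w, fun c z => real_inner_smul_right A z c⟩
    have hconv : Convex ℝ {z : (EuclideanSpace ℝ (Fin n)) | (inner ℝ A z : ℝ) ≤ g yhi - b} :=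
      convex_halfSpace_le hlin (g yhi - b)
    have hsub : frontier Ω ⊆ {z : (EuclideanSpace ℝ (Fin n)) | (inner ℝ A z : ℝ) ≤ g yhi - b} := by
      intro z hz
      have h1 := hAb z hz
      have h2 : g z ≤ g yhi := hghi hz
      simp only [Set.mem_setOf_eq]
      linarith
    have := convexHull_min hsub hconv (hΩhull hx)
    simp only [Set.mem_setOf_eq] at this
    linarith
  have hmemle : ∀ x ∈ Ω, ∀ r ∈ S x, r ≤ u x := by
    intro x hx r hr
    rw [hu x hx]
    exact le_csSup (hSbdd x hx) hr
  have hule : ∀ x ∈ Ω, ∀ c : ℝ, (∀ r ∈ S x, r ≤ c) → u x ≤ c := by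
    intro x hx c hc
    rw [hu x hx]
    exact csSup_le (hSne x) hc
  have hug : ∀ y ∈ frontier Ω, u y ≤ g y := by
    intro y hy
    refine hule y (hfsub hy) _ ?_
    rintro r ⟨A, b, hAb, rfl⟩
    exact hAb y hy
  -- the graph and its convex hull
  set G : Set ((EuclideanSpace ℝ (Fin n)) × ℝ) := (fun y => (y, g y)) '' (frontier Ω) with hG
  have hGc : IsCompact G := hfc.image_of_continuousOn (continuousOn_id.prodMk hg)
  set K := convexHull ℝ G with hK
  have hKc : IsCompact K := aux_isCompact_convexHull hGc
  have hKconv : Convex ℝ K := convex_convexHull ℝ G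
  set T : Set ℝ := {s : ℝ | ((x₀, s) : (EuclideanSpace ℝ (Fin n)) × ℝ) ∈ K} with hT
  have hTne : T.Nonempty := by
    have himg := (LinearMap.fst ℝ (EuclideanSpace ℝ (Fin n)) ℝ).image_convexHull G
    have h2 : ⇑(LinearMap.fst ℝ (EuclideanSpace ℝ (Fin n)) ℝ) '' G = frontier Ω := by
      ext z
      simp only [Set.mem_image, LinearMap.fst_apply]
      constructor
      · rintro ⟨p, ⟨y, hy, rfl⟩, rfl⟩
        exact hy
      · intro hz
        exact ⟨(z, g z), ⟨z, hz, rfl⟩, rfl⟩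
    have hx' : x₀ ∈ ⇑(LinearMap.fst ℝ (EuclideanSpace ℝ (Fin n)) ℝ) '' K := by
      rw [hK, himg, h2]
      exact hΩhull hx₀Ω
    obtain ⟨p, hpK, hp1⟩ := hx'
    simp only [LinearMap.fst_apply] at hp1
    refine ⟨p.2, ?_⟩
    show ((x₀, p.2) : (EuclideanSpace ℝ (Fin n)) × ℝ) ∈ K
    have hpe : ((x₀, p.2) : (EuclideanSpace ℝ (Fin n)) × ℝ) = p := by
      rw [← hp1]
    rwa [hpe]
  have hTsub : T ⊆ Prod.snd '' K := fun s hs => ⟨(x₀, s), hs, rfl⟩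
  have hTcl : IsClosed T := hKc.isClosed.preimage (Continuous.prodMk_right x₀)
  have hTc : IsCompact T := (hKc.image continuous_snd).of_isClosed_subset hTcl hTsub
  set m := sInf T with hm
  have hmT : m ∈ T := hTc.sInf_mem hTne
  -- strong duality : m ≤ u x₀
  have hum : m ≤ u x₀ := by
    by_contra hlt
    push_neg at hlt
    set ε := m - u x₀ with hε
    have hεpos : 0 < ε := by simp [hε]; linarith
    have hnot : ((x₀, m - ε) : (EuclideanSpace ℝ (Fin n)) × ℝ) ∉ K := by
      intro hmem
      have h1 : m - ε ∈ T := hmem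
      have h2 := csInf_le hTc.bddBelow h1
      rw [← hm] at h2
      linarith
    obtain ⟨f, c, hfc₁, hfc₂⟩ := geometric_hahn_banach_point_closed hKconv hKc.isClosed hnot
    set a := f (0, 1) with ha
    have hfsplit : ∀ (x : (EuclideanSpace ℝ (Fin n))) (t : ℝ), f (x, t) = f (x, 0) + t * a := by
      intro x t
      have hxt : ((x, t) : (EuclideanSpace ℝ (Fin n)) × ℝ) = (x, 0) + t • ((0 : (EuclideanSpace ℝ (Fin n))), (1 : ℝ)) := by
        simp [Prod.ext_iff]
      rw [hxt, map_add, map_smul, smul_eq_mul, ha]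
    have hapos : 0 < a := by
      have h1 : c < f (x₀, m) := hfc₂ _ hmT
      have h2 : f (x₀, m - ε) < c := hfc₁
      rw [hfsplit] at h1 h2
      nlinarith
    have hane : a ≠ 0 := ne_of_gt hapos
    have hainv : 0 < a⁻¹ := inv_pos.mpr hapos
    have haa : a * a⁻¹ = 1 := mul_inv_cancel₀ hane
    set φ : (EuclideanSpace ℝ (Fin n)) →L[ℝ] ℝ := f.comp (ContinuousLinearMap.inl ℝ (EuclideanSpace ℝ (Fin n)) ℝ) with hφ
    set A : (EuclideanSpace ℝ (Fin n)) := (InnerProductSpace.toDual ℝ (EuclideanSpace ℝ (Fin n))).symm φ with hA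
    have hAval : ∀ x : (EuclideanSpace ℝ (Fin n)), (inner ℝ A x : ℝ) = f (x, 0) := by
      intro x
      rw [hA]
      exact InnerProductSpace.toDual_symm_apply
    have hmem : ((inner ℝ ((-a⁻¹) • A) x₀ : ℝ) + c / a) ∈ S x₀ := by
      refine ⟨(-a⁻¹) • A, c / a, fun y hy => ?_, rfl⟩
      have hyK : ((y, g y) : (EuclideanSpace ℝ (Fin n)) × ℝ) ∈ K := subset_convexHull ℝ G ⟨y, hy, rfl⟩
      have h1 : c < f (y, 0) + g y * a := by
        have := hfc₂ _ hyK
        rwa [hfsplit] at this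
      rw [real_inner_smul_left, hAval, div_eq_mul_inv]
      have hmul := mul_lt_mul_of_pos_right h1 hainv
      have key : c * a⁻¹ < f (y, 0) * a⁻¹ + g y := by
        calc c * a⁻¹ < (f (y, 0) + g y * a) * a⁻¹ := hmul
          _ = f (y, 0) * a⁻¹ + g y * (a * a⁻¹) := by ring
          _ = f (y, 0) * a⁻¹ + g y := by rw [haa, mul_one]
      linarith
    have h2 : f (x₀, 0) + (m - ε) * a < c := by
      have := hfc₁
      rwa [hfsplit] at this
    have h3 : (inner ℝ ((-a⁻¹) • A) x₀ : ℝ) + c / a ≤ u x₀ := hmemle x₀ hx₀Ω _ hmem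
    rw [real_inner_smul_left, hAval, div_eq_mul_inv] at h3
    have hob : m - ε = u x₀ := by rw [hε]; ring
    have hmul := mul_lt_mul_of_pos_right h2 hainv
    have key2 : f (x₀, 0) * a⁻¹ + (m - ε) < c * a⁻¹ := by
      calc f (x₀, 0) * a⁻¹ + (m - ε)
            = f (x₀, 0) * a⁻¹ + (m - ε) * (a * a⁻¹) := by rw [haa, mul_one]
        _ = (f (x₀, 0) + (m - ε) * a) * a⁻¹ := by ring
        _ < c * a⁻¹ := hmul
    linarith
  -- representation of (x₀, m) as convex combination of graph points
  have hrep : ((x₀, m) : (EuclideanSpace ℝ (Fin n)) × ℝ) ∈ convexHull ℝ G := hmT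
  rw [convexHull_eq] at hrep
  obtain ⟨ι, t, wt, zt, hw0, hw1, hzG, hcm⟩ := hrep
  have hcm' : ∑ i ∈ t, wt i • zt i = ((x₀, m) : (EuclideanSpace ℝ (Fin n)) × ℝ) := by
    rw [← hcm, Finset.centerMass_eq_of_sum_1 _ _ hw1]
  have hz1 : ∀ i ∈ t, (zt i).1 ∈ frontier Ω ∧ (zt i).2 = g ((zt i).1) := by
    intro i hi
    obtain ⟨y, hy, heq⟩ := hzG i hi
    rw [← heq]
    exact ⟨hy, rfl⟩
  have hx₀eq : ∑ i ∈ t, wt i • (zt i).1 = x₀ := by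
    have h1 := congrArg (LinearMap.fst ℝ (EuclideanSpace ℝ (Fin n)) ℝ) hcm'
    rw [map_sum] at h1
    simpa using h1
  have hmeq : ∑ i ∈ t, wt i * (zt i).2 = m := by
    have h1 := congrArg (LinearMap.snd ℝ (EuclideanSpace ℝ (Fin n)) ℝ) hcm'
    rw [map_sum] at h1
    simpa [smul_eq_mul] using h1
  obtain ⟨AP, bP, hP⟩ := hPaff
  have hsumP : ∑ i ∈ t, wt i * P ((zt i).1) = P x₀ := by
    have e1 : ∑ i ∈ t, wt i * P ((zt i).1)
        = (∑ i ∈ t, wt i * (inner ℝ AP ((zt i).1) : ℝ)) + (∑ i ∈ t, wt i) * bP := by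
      rw [Finset.sum_mul, ← Finset.sum_add_distrib]
      refine Finset.sum_congr rfl fun i _ => ?_
      rw [hP]; ring
    rw [e1, hw1, one_mul, hP x₀, ← hx₀eq, inner_sum]
    congr 1
    exact Finset.sum_congr rfl fun i _ => (real_inner_smul_right _ _ _).symm
  have hsumg : ∑ i ∈ t, wt i * g ((zt i).1) = m := by
    rw [← hmeq]
    exact Finset.sum_congr rfl fun i hi => by rw [(hz1 i hi).2]
  have hterm0 : ∀ i ∈ t, 0 ≤ wt i * (g ((zt i).1) - P ((zt i).1)) := by
    intro i hi
    have h1 : P ((zt i).1) ≤ u ((zt i).1) := hPle _ (hfsub (hz1 i hi).1)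
    have h2 : u ((zt i).1) ≤ g ((zt i).1) := hug _ (hz1 i hi).1
    exact mul_nonneg (hw0 i hi) (by linarith)
  have hsum0 : ∑ i ∈ t, wt i * (g ((zt i).1) - P ((zt i).1)) = 0 := by
    have he : ∑ i ∈ t, wt i * (g ((zt i).1) - P ((zt i).1)) = m - P x₀ := by
      rw [Finset.sum_congr rfl (fun i _ => mul_sub (wt i) _ _), Finset.sum_sub_distrib,
        hsumg, hsumP]
    rw [he]
    have : m - P x₀ ≤ 0 := by rw [hPeq]; linarith
    have h2 : 0 ≤ m - P x₀ := he ▸ Finset.sum_nonneg hterm0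
    linarith
  obtain ⟨i₀, hi₀t, hwi₀⟩ : ∃ i ∈ t, wt i ≠ 0 := by
    apply Finset.exists_ne_zero_of_sum_ne_zero
    rw [hw1]; exact one_ne_zero
  have hzero : wt i₀ * (g ((zt i₀).1) - P ((zt i₀).1)) = 0 :=
    (Finset.sum_eq_zero_iff_of_nonneg hterm0).mp hsum0 i₀ hi₀t
  set y := (zt i₀).1 with hy
  have hyF : y ∈ frontier Ω := (hz1 i₀ hi₀t).1
  have hgy : g y = P y := by
    rcases mul_eq_zero.mp hzero with h | h
    · exact absurd h hwi₀
    · linarith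
  have huy : u y = P y := le_antisymm (by rw [← hgy]; exact hug y hyF) (hPle y (hfsub hyF))
  refine ⟨y, hyF, ?_⟩
  rintro z ⟨p, q, hp, hq, hpq, rfl⟩
  have hzΩ : p • x₀ + q • y ∈ Ω := hΩconv hx₀Ω (hfsub hyF) hp hq hpq
  refine ⟨hzΩ, le_antisymm ?_ (hPle _ hzΩ)⟩
  have hPz : P (p • x₀ + q • y) = p * P x₀ + q * P y := by
    rw [hP, hP, hP, inner_add_right, real_inner_smul_right, real_inner_smul_right]
    linear_combination bP * hpq.symm
  refine hule _ hzΩ _ ?_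
  rintro r ⟨A, b, hAb, rfl⟩
  have h1 : (inner ℝ A x₀ : ℝ) + b ≤ u x₀ := hmemle _ hx₀Ω _ ⟨A, b, hAb, rfl⟩
  have h2 : (inner ℝ A y : ℝ) + b ≤ u y := hmemle _ (hfsub hyF) _ ⟨A, b, hAb, rfl⟩
  have he : (inner ℝ A (p • x₀ + q • y) : ℝ) + b
      = p * ((inner ℝ A x₀ : ℝ) + b) + q * ((inner ℝ A y : ℝ) + b) := by
    rw [inner_add_right, real_inner_smul_right, real_inner_smul_right]
    linear_combination b * hpq.symm
  rw [he, hPz]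
  have hh1 := mul_le_mul_of_nonneg_left h1 hp
  have hh2 := mul_le_mul_of_nonneg_left h2 hq
  rw [hPeq]
  rw [huy] at hh2
  linarith
end

section
/- Let Ω ⊂ ℝⁿ be a compact convex set with nonempty interior, let g : ∂Ω → ℝ be continuous, and let u be the convex envelope of the boundary data g. Then for every point x₀ in the interior of Ω there exist a unit vector v ∈ ℝⁿ and δ > 0 such that the function t ↦ u(x₀ + t v) is affine on the interval [−δ, δ]; consequently the second directional derivative of u at x₀ in the direction v vanishes, so that the smallest eigenvalue of the Hessian of u at x₀ is zero in the (almost) classical sense, even when u is not differentiable. -/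
open Set


/-- Convex hull of a compact set in a finite-dimensional space is compact. -/
theorem isCompact_convexHull_of_isCompact {E : Type*} [NormedAddCommGroup E] [NormedSpace ℝ E]
    [FiniteDimensional ℝ E] {K : Set E} (hK : IsCompact K) :
    IsCompact (convexHull ℝ K) := by
  classical
  rcases K.eq_empty_or_nonempty with rfl | ⟨y₀, hy₀⟩
  · simp
  set m := Module.finrank ℝ E + 1 with hm
  set D : Set ((Fin m → ℝ) × (Fin m → E)) :=
    (stdSimplex ℝ (Fin m)) ×ˢ (Set.univ.pi fun _ => K) with hD
  have hDc : IsCompact D := (isCompact_stdSimplex (𝕜 := ℝ) (ι := Fin m)).prod (isCompact_univ_pi fun _ => hK)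
  have hf : Continuous fun p : (Fin m → ℝ) × (Fin m → E) => ∑ i, p.1 i • p.2 i := by
    refine continuous_finset_sum _ fun i _ => ?_
    exact ((continuous_apply i).comp continuous_fst).smul ((continuous_apply i).comp continuous_snd)
  have himg : (fun p : (Fin m → ℝ) × (Fin m → E) => ∑ i, p.1 i • p.2 i) '' D = convexHull ℝ K := by
    apply Subset.antisymm
    · rintro x ⟨⟨w, z⟩, ⟨⟨hw0, hw1⟩, hz⟩, rfl⟩
      exact (convex_convexHull ℝ K).sum_mem (fun i _ => hw0 i) hw1
        (fun i _ => subset_convexHull ℝ K (hz i (mem_univ i)))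
    · intro x hx
      obtain ⟨ι, hι, z, w, hzK, hai, hw0, hw1, hwz⟩ := eq_pos_convex_span_of_mem_convexHull hx
      have hcard : Fintype.card ι ≤ m := by
        refine hai.card_le_finrank_succ.trans ?_
        exact Nat.add_le_add_right (Submodule.finrank_le _) 1
      obtain ⟨e⟩ : Nonempty (ι ↪ Fin m) := by
        rw [Function.Embedding.nonempty_iff_card_le]
        simpa using hcard
      set w' : Fin m → ℝ := fun j => if h : ∃ i, e i = j then w h.choose else 0 with hw'
      set z' : Fin m → E := fun j => if h : ∃ i, e i = j then z h.choose else y₀ with hz'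
      have hwe : ∀ i : ι, w' (e i) = w i := by
        intro i
        have h : ∃ i', e i' = e i := ⟨i, rfl⟩
        simp only [hw', dif_pos h]
        rw [e.injective h.choose_spec]
      have hze : ∀ i : ι, z' (e i) = z i := by
        intro i
        have h : ∃ i', e i' = e i := ⟨i, rfl⟩
        simp only [hz', dif_pos h]
        rw [e.injective h.choose_spec]
      have hsum1 : ∑ j, w' j = ∑ i, w i := by
        rw [← Finset.sum_subset (Finset.subset_univ (Finset.univ.map e))]
        · rw [Finset.sum_map]
          exact Finset.sum_congr rfl fun i _ => by rw [hwe]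
        · intro j _ hj
          have : ¬∃ i, e i = j := by simpa [Finset.mem_map] using hj
          simp only [hw', dif_neg this]
      have hsum2 : ∑ j, w' j • z' j = ∑ i, w i • z i := by
        rw [← Finset.sum_subset (Finset.subset_univ (Finset.univ.map e))]
        · rw [Finset.sum_map]
          exact Finset.sum_congr rfl fun i _ => by rw [hwe, hze]
        · intro j _ hj
          have : ¬∃ i, e i = j := by simpa [Finset.mem_map] using hj
          simp only [hw', dif_neg this, zero_smul]
      refine ⟨⟨w', z'⟩, ⟨⟨fun j => ?_, ?_⟩, fun j _ => ?_⟩, ?_⟩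
      · by_cases h : ∃ i, e i = j
        · simp only [hw', dif_pos h]; exact (hw0 _).le
        · simp [hw', dif_neg h]
      · rw [hsum1, hw1]
      · by_cases h : ∃ i, e i = j
        · simp only [hz', dif_pos h]; exact hzK ⟨_, rfl⟩
        · simp [hz', dif_neg h, hy₀]
      · exact hsum2.trans hwz
  rw [← himg]
  exact hDc.image hf


/-- From an interior point of a compact set, every ray hits the frontier. -/
theorem exists_frontier_hit {E : Type*} [NormedAddCommGroup E] [NormedSpace ℝ E]
    {Ω : Set E} (hΩc : IsCompact Ω) {x v : E} (hx : x ∈ interior Ω) (hv : v ≠ 0) :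
    ∃ t : ℝ, 0 < t ∧ x + t • v ∈ frontier Ω := by
  obtain ⟨R, hR⟩ := hΩc.isBounded.subset_closedBall 0
  set S : Set ℝ := {t : ℝ | 0 ≤ t ∧ x + t • v ∈ Ω} with hS
  have hcont : Continuous fun t : ℝ => x + t • v :=
    continuous_const.add (continuous_id.smul continuous_const)
  have hSc : IsClosed S := by
    have : S = Ici 0 ∩ (fun t : ℝ => x + t • v) ⁻¹' Ω := rfl
    rw [this]
    exact isClosed_Ici.inter (hΩc.isClosed.preimage hcont)
  have hS0 : (0:ℝ) ∈ S := ⟨le_refl _, by simpa using interior_subset hx⟩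
  have hvpos : 0 < ‖v‖ := norm_pos_iff.2 hv
  have hSbdd : BddAbove S := by
    refine ⟨(R + ‖x‖) / ‖v‖, fun t ht => ?_⟩
    have h1 : ‖x + t • v‖ ≤ R := by simpa using hR ht.2
    have h2 : t * ‖v‖ = ‖t • v‖ := by
      rw [norm_smul, Real.norm_of_nonneg ht.1]
    have h3 : ‖t • v‖ ≤ ‖x + t • v‖ + ‖x‖ := by
      have := norm_sub_le (x + t • v) x
      rwa [add_sub_cancel_left] at this
    rw [le_div_iff₀ hvpos, h2]
    linarith
  set t₀ := sSup S with ht₀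
  have ht₀S : t₀ ∈ S := hSc.csSup_mem ⟨0, hS0⟩ hSbdd
  obtain ⟨ε, hε, hball⟩ := Metric.mem_nhds_iff.1 (mem_interior_iff_mem_nhds.1 hx)
  have hsmall : ∀ s : ℝ, |s| < ε / ‖v‖ → x + s • v ∈ Metric.ball x ε := by
    intro s hs
    rw [Metric.mem_ball, dist_eq_norm]
    have : ‖x + s • v - x‖ = |s| * ‖v‖ := by
      rw [add_sub_cancel_left, norm_smul, Real.norm_eq_abs]
    rw [this]
    calc |s| * ‖v‖ < ε / ‖v‖ * ‖v‖ := by exact mul_lt_mul_of_pos_right hs hvpos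
      _ = ε := by field_simp
  have ht₀pos : 0 < t₀ := by
    have hmem : ε / ‖v‖ / 2 ∈ S := by
      constructor
      · positivity
      · refine hball (hsmall _ ?_)
        rw [abs_of_pos (by positivity)]
        linarith [half_lt_self (show 0 < ε / ‖v‖ by positivity)]
    have := le_csSup hSbdd hmem
    have h2 : 0 < ε / ‖v‖ / 2 := by positivity
    linarith
  refine ⟨t₀, ht₀pos, ?_⟩
  rw [hΩc.isClosed.frontier_eq]
  refine ⟨ht₀S.2, fun hint => ?_⟩
  obtain ⟨ε', hε', hball'⟩ := Metric.mem_nhds_iff.1 (mem_interior_iff_mem_nhds.1 hint)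
  have hmem : t₀ + ε' / ‖v‖ / 2 ∈ S := by
    constructor
    · positivity
    · apply hball'
      have : x + (t₀ + ε' / ‖v‖ / 2) • v = (x + t₀ • v) + (ε' / ‖v‖ / 2) • v := by
        rw [add_smul]; abel
      rw [this, Metric.mem_ball, dist_eq_norm, add_sub_cancel_left, norm_smul, Real.norm_eq_abs,
        abs_of_pos (by positivity)]
      calc ε' / ‖v‖ / 2 * ‖v‖ < ε' / ‖v‖ * ‖v‖ := by
            exact mul_lt_mul_of_pos_right (half_lt_self (by positivity)) hvpos
        _ = ε' := by field_simp
  have := le_csSup hSbdd hmem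
  have h2 : 0 < ε' / ‖v‖ / 2 := by positivity
  linarith


theorem affine_le_on_compact {E : Type*} [NormedAddCommGroup E] [InnerProductSpace ℝ E]
    {Ω : Set E} (hΩc : IsCompact Ω) {v : E} (hv : v ≠ 0) {A : E} {b M : ℝ}
    (hb : ∀ y ∈ frontier Ω, (inner ℝ A y : ℝ) + b ≤ M) :
    ∀ x ∈ Ω, (inner ℝ A x : ℝ) + b ≤ M := by
  intro x hx
  have hsplit : x ∈ interior Ω ∪ frontier Ω := by
    rw [← closure_eq_interior_union_frontier]
    exact subset_closure hx
  rcases hsplit with hxi | hxf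
  · obtain ⟨tp, htp, hyp⟩ := exists_frontier_hit hΩc hxi hv
    obtain ⟨tm, htm, hym⟩ := exists_frontier_hit hΩc hxi (neg_ne_zero.2 hv)
    set s := tp + tm with hs
    have hspos : 0 < s := by positivity
    have hx' : x = (tm/s) • (x + tp • v) + (tp/s) • (x + tm • (-v)) := by
      have hsne : s ≠ 0 := ne_of_gt hspos
      match_scalars <;> field_simp <;> ring
    have e1 : (inner ℝ A x : ℝ) = (tm/s) * inner ℝ A (x + tp • v) + (tp/s) * inner ℝ A (x + tm • (-v)) := by
      conv_lhs => rw [hx']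
      rw [inner_add_right, real_inner_smul_right, real_inner_smul_right]
    have b1 := hb _ hyp
    have b2 := hb _ hym
    have hl : 0 < tm/s := by positivity
    have hm : 0 < tp/s := by positivity
    have h1 : tm/s + tp/s = 1 := by field_simp [hs]; ring
    have key : (inner ℝ A x : ℝ) + b
        = tm/s * ((inner ℝ A (x + tp • v) : ℝ) + b) + tp/s * ((inner ℝ A (x + tm • (-v)) : ℝ) + b) := by
      linear_combination e1 - b * h1
    calc (inner ℝ A x : ℝ) + b
        = tm/s * ((inner ℝ A (x + tp • v) : ℝ) + b) + tp/s * ((inner ℝ A (x + tm • (-v)) : ℝ) + b) := key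
      _ ≤ tm/s * M + tp/s * M :=
          add_le_add (mul_le_mul_of_nonneg_left b1 hl.le) (mul_le_mul_of_nonneg_left b2 hm.le)
      _ = M := by rw [← add_mul, h1, one_mul]
  · exact hb _ hxf


set_option maxHeartbeats 1000000 in
/-- At every interior point, the convex envelope of boundary data is affine along
some direction, and consequently its second directional derivative in that
direction vanishes. -/
theorem convex_envelope_affine_in_some_direction (n : ℕ) (hn : 1 ≤ n)
    (Ω : Set (EuclideanSpace ℝ (Fin n)))
    (hΩc : IsCompact Ω) (hΩconv : Convex ℝ Ω) (hΩint : (interior Ω).Nonempty)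
    (g : EuclideanSpace ℝ (Fin n) → ℝ) (hg : ContinuousOn g (frontier Ω))
    (u : EuclideanSpace ℝ (Fin n) → ℝ)
    (hu : ∀ x ∈ Ω, u x = sSup {r : ℝ | ∃ (A : EuclideanSpace ℝ (Fin n)) (b : ℝ),
      (∀ y ∈ frontier Ω, (inner ℝ A y : ℝ) + b ≤ g y) ∧ r = (inner ℝ A x : ℝ) + b}) :
    ∀ x₀ ∈ interior Ω, ∃ v : EuclideanSpace ℝ (Fin n), ‖v‖ = 1 ∧
      ∃ δ > (0 : ℝ), (∃ a c : ℝ, ∀ t ∈ Set.Icc (-δ) δ, u (x₀ + t • v) = a * t + c) ∧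
        Filter.Tendsto
          (fun h : ℝ => (u (x₀ + h • v) + u (x₀ - h • v) - 2 * u x₀) / h ^ 2)
          (nhdsWithin 0 (Set.Ioi 0)) (nhds 0) := by
  classical
  intro x₀ hx₀
  have hΩcl : IsClosed Ω := hΩc.isClosed
  have hx₀Ω : x₀ ∈ Ω := interior_subset hx₀
  -- a nonzero vector
  set v₁ : (EuclideanSpace ℝ (Fin n)) := EuclideanSpace.single (⟨0, hn⟩ : Fin n) (1:ℝ) with hv₁def
  have hv₁ : v₁ ≠ 0 := by
    have hnorm : ‖v₁‖ = 1 := by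
      rw [hv₁def, EuclideanSpace.norm_single, norm_one]
    intro h
    rw [h, norm_zero] at hnorm
    exact one_ne_zero hnorm.symm
  -- frontier facts
  have hFsub : frontier Ω ⊆ Ω := by
    rw [hΩcl.frontier_eq]; exact diff_subset
  have hFc : IsCompact (frontier Ω) := hΩc.of_isClosed_subset isClosed_frontier hFsub
  have hFne : (frontier Ω).Nonempty := by
    obtain ⟨t, ht, hmem⟩ := exists_frontier_hit hΩc hx₀ hv₁
    exact ⟨_, hmem⟩
  -- max and min of g on frontier
  obtain ⟨yM, hyM, hMmax⟩ := hFc.exists_isMaxOn hFne hg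
  set M := g yM with hM
  have hgM : ∀ y ∈ frontier Ω, g y ≤ M := hMmax
  obtain ⟨ym, hym, hmmin⟩ := hFc.exists_isMinOn hFne hg
  set m0 := g ym with hm0
  have hgm : ∀ y ∈ frontier Ω, m0 ≤ g y := hmmin
  have hm0M : m0 ≤ M := hgm yM hyM
  have hAdm0 : ∀ y ∈ frontier Ω, (inner ℝ (0:(EuclideanSpace ℝ (Fin n))) y : ℝ) + m0 ≤ g y := by
    intro y hy; simpa using hgm y hy
  -- upper bound for admissible affine functions on Ω
  have hbound : ∀ (A : (EuclideanSpace ℝ (Fin n))) (b : ℝ), (∀ y ∈ frontier Ω, (inner ℝ A y : ℝ) + b ≤ g y) →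
      ∀ x ∈ Ω, (inner ℝ A x : ℝ) + b ≤ M := by
    intro A b hA
    exact affine_le_on_compact hΩc hv₁ (fun y hy => (hA y hy).trans (hgM y hy))
  have hSne : ∀ x : (EuclideanSpace ℝ (Fin n)), ({r : ℝ | ∃ (A : (EuclideanSpace ℝ (Fin n))) (b : ℝ),
      (∀ y ∈ frontier Ω, (inner ℝ A y : ℝ) + b ≤ g y) ∧ r = (inner ℝ A x : ℝ) + b}).Nonempty :=
    fun x => ⟨_, 0, m0, hAdm0, rfl⟩
  have hSbdd : ∀ x ∈ Ω, BddAbove {r : ℝ | ∃ (A : (EuclideanSpace ℝ (Fin n))) (b : ℝ),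
      (∀ y ∈ frontier Ω, (inner ℝ A y : ℝ) + b ≤ g y) ∧ r = (inner ℝ A x : ℝ) + b} := by
    intro x hx
    refine ⟨M, ?_⟩
    rintro r ⟨A, b, hA, rfl⟩
    exact hbound A b hA x hx
  have hul : ∀ x ∈ Ω, ∀ (A : (EuclideanSpace ℝ (Fin n))) (b : ℝ), (∀ y ∈ frontier Ω, (inner ℝ A y : ℝ) + b ≤ g y) →
      (inner ℝ A x : ℝ) + b ≤ u x := by
    intro x hx A b hA
    rw [hu x hx]
    exact le_csSup (hSbdd x hx) ⟨A, b, hA, rfl⟩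
  have huu : ∀ x ∈ Ω, ∀ c : ℝ, (∀ (A : (EuclideanSpace ℝ (Fin n))) (b : ℝ),
      (∀ y ∈ frontier Ω, (inner ℝ A y : ℝ) + b ≤ g y) → (inner ℝ A x : ℝ) + b ≤ c) → u x ≤ c := by
    intro x hx c hc
    rw [hu x hx]
    refine csSup_le (hSne x) ?_
    rintro r ⟨A, b, hA, rfl⟩
    exact hc A b hA
  -- attainment of the sup at x₀
  obtain ⟨ρ, hρpos, hρ⟩ : ∃ ρ > (0:ℝ), Metric.closedBall x₀ ρ ⊆ Ω := by
    obtain ⟨ε, hε, hball⟩ := Metric.mem_nhds_iff.1 (mem_interior_iff_mem_nhds.1 hx₀)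
    exact ⟨ε/2, by positivity, (Metric.closedBall_subset_ball (half_lt_self hε)).trans hball⟩
  set T : Set ((EuclideanSpace ℝ (Fin n)) × ℝ) := {p | (∀ y ∈ frontier Ω, (inner ℝ p.1 y : ℝ) + p.2 ≤ g y) ∧
      m0 ≤ (inner ℝ p.1 x₀ : ℝ) + p.2} with hT
  have hTne : ((0:(EuclideanSpace ℝ (Fin n))), m0) ∈ T := by
    refine ⟨hAdm0, ?_⟩
    simp
  have hTclosed : IsClosed T := by
    have h1 : IsClosed {p : (EuclideanSpace ℝ (Fin n)) × ℝ | ∀ y ∈ frontier Ω, (inner ℝ p.1 y : ℝ) + p.2 ≤ g y} := by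
      have : {p : (EuclideanSpace ℝ (Fin n)) × ℝ | ∀ y ∈ frontier Ω, (inner ℝ p.1 y : ℝ) + p.2 ≤ g y} =
          ⋂ y ∈ frontier Ω, {p : (EuclideanSpace ℝ (Fin n)) × ℝ | (inner ℝ p.1 y : ℝ) + p.2 ≤ g y} := by
        ext p; simp
      rw [this]
      refine isClosed_biInter fun y hy => isClosed_le ?_ continuous_const
      exact (continuous_fst.inner continuous_const).add continuous_snd
    have h2 : IsClosed {p : (EuclideanSpace ℝ (Fin n)) × ℝ | m0 ≤ (inner ℝ p.1 x₀ : ℝ) + p.2} :=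
      isClosed_le continuous_const ((continuous_fst.inner continuous_const).add continuous_snd)
    exact h1.inter h2
  set Ra := (M - m0) / ρ with hRa
  have hRa0 : 0 ≤ Ra := div_nonneg (by linarith) hρpos.le
  have hA_bd : ∀ p ∈ T, ‖p.1‖ ≤ Ra := by
    rintro ⟨A, b⟩ ⟨hA, hAb⟩
    by_cases hA0 : A = 0
    · simp [hA0, hRa0]
    · have hnA : 0 < ‖A‖ := norm_pos_iff.2 hA0
      set z : (EuclideanSpace ℝ (Fin n)) := x₀ + ρ • ‖A‖⁻¹ • A with hz
      have hzball : z ∈ Metric.closedBall x₀ ρ := by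
        rw [Metric.mem_closedBall, dist_eq_norm, hz, add_sub_cancel_left, norm_smul, norm_smul,
          norm_inv, norm_norm, Real.norm_of_nonneg hρpos.le]
        rw [inv_mul_cancel₀ (ne_of_gt hnA), mul_one]
      have hzΩ : z ∈ Ω := hρ hzball
      have h1 : (inner ℝ A z : ℝ) + b ≤ M := hbound A b hA z hzΩ
      have h2 : (inner ℝ A z : ℝ) = (inner ℝ A x₀ : ℝ) + ρ * ‖A‖ := by
        rw [hz, inner_add_right, real_inner_smul_right, real_inner_smul_right,
          real_inner_self_eq_norm_sq]
        field_simp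
      rw [le_div_iff₀ hρpos]
      rw [h2] at h1
      linarith [hAb]
  have hb_bd : ∀ p ∈ T, p.2 ∈ Icc (m0 - Ra * ‖x₀‖) (M + Ra * ‖x₀‖) := by
    rintro ⟨A, b⟩ hp
    obtain ⟨hA, hAb⟩ := hp
    have h1 : (inner ℝ A x₀ : ℝ) + b ≤ M := hbound A b hA x₀ hx₀Ω
    have h2 : |(inner ℝ A x₀ : ℝ)| ≤ Ra * ‖x₀‖ := by
      calc |(inner ℝ A x₀ : ℝ)| ≤ ‖A‖ * ‖x₀‖ := abs_real_inner_le_norm A x₀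
        _ ≤ Ra * ‖x₀‖ := mul_le_mul_of_nonneg_right (hA_bd ⟨A, b⟩ ⟨hA, hAb⟩) (norm_nonneg _)
    have h3 := abs_le.1 h2
    constructor <;> [skip; skip] <;> simp only [] <;> linarith [h3.1, h3.2]
  have hTc : IsCompact T := by
    refine IsCompact.of_isClosed_subset ((isCompact_closedBall (0:(EuclideanSpace ℝ (Fin n))) Ra).prod
      (isCompact_Icc (a := m0 - Ra * ‖x₀‖) (b := M + Ra * ‖x₀‖))) hTclosed ?_
    rintro p hp
    exact ⟨by simpa [mem_closedBall_zero_iff] using hA_bd p hp, hb_bd p hp⟩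
  have hfc : Continuous fun p : (EuclideanSpace ℝ (Fin n)) × ℝ => (inner ℝ p.1 x₀ : ℝ) + p.2 :=
    (continuous_fst.inner continuous_const).add continuous_snd
  obtain ⟨p₀, hp₀T, hp₀max⟩ := hTc.exists_isMaxOn ⟨_, hTne⟩ hfc.continuousOn
  set A₀ := p₀.1 with hA₀
  set b₀ := p₀.2 with hb₀
  have hAdmA₀ : ∀ y ∈ frontier Ω, (inner ℝ A₀ y : ℝ) + b₀ ≤ g y := hp₀T.1
  have hgreat : IsGreatest {r : ℝ | ∃ (A : (EuclideanSpace ℝ (Fin n))) (b : ℝ),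
      (∀ y ∈ frontier Ω, (inner ℝ A y : ℝ) + b ≤ g y) ∧ r = (inner ℝ A x₀ : ℝ) + b}
      ((inner ℝ A₀ x₀ : ℝ) + b₀) := by
    constructor
    · exact ⟨A₀, b₀, hAdmA₀, rfl⟩
    · rintro r ⟨A, b, hA, rfl⟩
      by_cases hcase : m0 ≤ (inner ℝ A x₀ : ℝ) + b
      · exact hp₀max (⟨hA, hcase⟩ : (A, b) ∈ T)
      · push_neg at hcase
        have h0 := hp₀max hTne
        simp only [Set.mem_setOf_eq, inner_zero_left, zero_add] at h0
        linarith
  have hux₀ : u x₀ = (inner ℝ A₀ x₀ : ℝ) + b₀ := by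
    rw [hu x₀ hx₀Ω]
    exact hgreat.csSup_eq
  -- contact set on the boundary
  set K : Set (EuclideanSpace ℝ (Fin n)) := {y | y ∈ frontier Ω ∧ (inner ℝ A₀ y : ℝ) + b₀ = g y} with hK
  have hKF : K ⊆ frontier Ω := fun y hy => hy.1
  have hKcompact : IsCompact K := by
    have hrest : Continuous fun y : frontier Ω => g (y:(EuclideanSpace ℝ (Fin n))) - ((inner ℝ A₀ (y:(EuclideanSpace ℝ (Fin n))) : ℝ) + b₀) := by
      have h1 : Continuous fun y : frontier Ω => g (y:(EuclideanSpace ℝ (Fin n))) :=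
        continuousOn_iff_continuous_restrict.mp hg
      exact h1.sub ((continuous_const.inner continuous_subtype_val).add continuous_const)
    haveI hcs : CompactSpace (frontier Ω) := isCompact_iff_compactSpace.mp hFc
    have hcl : IsClosed {y : frontier Ω | g (y:(EuclideanSpace ℝ (Fin n))) - ((inner ℝ A₀ (y:(EuclideanSpace ℝ (Fin n))) : ℝ) + b₀) = 0} :=
      isClosed_eq hrest continuous_const
    have himg := hcl.isCompact.image (continuous_subtype_val :
      Continuous fun y : frontier Ω => (y : (EuclideanSpace ℝ (Fin n))))
    convert himg using 1
    ext y
    constructor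
    · rintro ⟨hyF, heq⟩
      exact ⟨⟨y, hyF⟩, by simp only [Set.mem_setOf_eq]; linarith, rfl⟩
    · rintro ⟨⟨y', hy'⟩, hmem, rfl⟩
      simp only [mem_setOf_eq] at hmem
      exact ⟨hy', by linarith⟩
  have hKΩ : convexHull ℝ K ⊆ Ω := convexHull_min (hKF.trans hFsub) hΩconv
  -- x₀ lies in the convex hull of the contact set
  have hx₀K : x₀ ∈ convexHull ℝ K := by
    by_contra hxK
    have hKcl : IsClosed (convexHull ℝ K) :=
      (isCompact_convexHull_of_isCompact hKcompact).isClosed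
    obtain ⟨f, c, hfc1, hfc2⟩ :=
      geometric_hahn_banach_closed_point (convex_convexHull ℝ K) hKcl hxK
    set q : (EuclideanSpace ℝ (Fin n)) := (InnerProductSpace.toDual ℝ (EuclideanSpace ℝ (Fin n))).symm f with hq
    have hqv : ∀ z : (EuclideanSpace ℝ (Fin n)), (inner ℝ q z : ℝ) = f z := fun z => InnerProductSpace.toDual_symm_apply
    -- bound for inner ℝ q on the frontier
    obtain ⟨yR, hyR, hRmax⟩ := hFc.exists_isMaxOn hFne
      ((continuous_const.inner continuous_id).continuousOn :
        ContinuousOn (fun y : (EuclideanSpace ℝ (Fin n)) => (inner ℝ q y : ℝ)) (frontier Ω))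
    set R : ℝ := max ((inner ℝ q yR : ℝ) - c) 0 + 1 with hR
    have hRpos : 0 < R := by positivity
    have hRbd : ∀ y ∈ frontier Ω, (inner ℝ q y : ℝ) - c ≤ R := by
      intro y hy
      have := hRmax hy
      simp only [Set.mem_setOf_eq, id_eq] at this
      have h2 : (inner ℝ q yR : ℝ) - c ≤ max ((inner ℝ q yR : ℝ) - c) 0 := le_max_left _ _
      linarith [le_max_left ((inner ℝ q yR : ℝ) - c) 0]
    -- positivity of the gap off the contact set
    have hgap : ∀ y ∈ frontier Ω, c ≤ (inner ℝ q y : ℝ) →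
        0 < g y - ((inner ℝ A₀ y : ℝ) + b₀) := by
      intro y hy hcy
      have hle : (inner ℝ A₀ y : ℝ) + b₀ ≤ g y := hAdmA₀ y hy
      rcases eq_or_lt_of_le hle with heq | hlt
      · exfalso
        have hyK : y ∈ K := ⟨hy, heq⟩
        have := hfc1 y (subset_convexHull ℝ K hyK)
        rw [← hqv y] at this
        linarith
      · linarith
    set Fq : Set (EuclideanSpace ℝ (Fin n)) := frontier Ω ∩ {y | c ≤ (inner ℝ q y : ℝ)} with hFq
    have hFqc : IsCompact Fq := hFc.inter_right
      (isClosed_le continuous_const (continuous_const.inner continuous_id))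
    -- choose the tilting parameter
    obtain ⟨t, htpos, hkey⟩ : ∃ t : ℝ, 0 < t ∧ ∀ y ∈ frontier Ω,
        t * ((inner ℝ q y : ℝ) - c) ≤ g y - ((inner ℝ A₀ y : ℝ) + b₀) := by
      rcases Fq.eq_empty_or_nonempty with hFqe | hFqne
      · refine ⟨1, one_pos, fun y hy => ?_⟩
        have hyc : (inner ℝ q y : ℝ) < c := by
          by_contra hge
          push_neg at hge
          exact absurd (show y ∈ Fq from ⟨hy, hge⟩) (by rw [hFqe]; exact notMem_empty y)
        have := hAdmA₀ y hy
        nlinarith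
      · have hφcont : ContinuousOn (fun y : (EuclideanSpace ℝ (Fin n)) => g y - ((inner ℝ A₀ y : ℝ) + b₀)) Fq :=
          (hg.sub ((continuous_const.inner continuous_id).add continuous_const).continuousOn).mono
            inter_subset_left
        obtain ⟨y₁, hy₁, hminOn⟩ := hFqc.exists_isMinOn hFqne hφcont
        set ε := g y₁ - ((inner ℝ A₀ y₁ : ℝ) + b₀) with hεdef
        have hεpos : 0 < ε := hgap y₁ hy₁.1 hy₁.2
        refine ⟨ε / R, by positivity, fun y hy => ?_⟩
        by_cases hcy : c ≤ (inner ℝ q y : ℝ)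
        · have h1 : ε / R * ((inner ℝ q y : ℝ) - c) ≤ ε / R * R :=
            mul_le_mul_of_nonneg_left (hRbd y hy) (by positivity)
          have h2 : ε / R * R = ε := by field_simp
          have h3 : ε ≤ g y - ((inner ℝ A₀ y : ℝ) + b₀) := hminOn ⟨hy, hcy⟩
          linarith
        · push_neg at hcy
          have h1 : ε / R * ((inner ℝ q y : ℝ) - c) ≤ 0 := by
            apply mul_nonpos_of_nonneg_of_nonpos (by positivity)
            linarith
          have := hAdmA₀ y hy
          linarith
    -- the tilted affine map contradicts maximality
    have hAdm' : ∀ y ∈ frontier Ω, (inner ℝ (A₀ + t • q) y : ℝ) + (b₀ - t * c) ≤ g y := by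
      intro y hy
      have h1 : (inner ℝ (A₀ + t • q) y : ℝ) = (inner ℝ A₀ y : ℝ) + t * (inner ℝ q y : ℝ) := by
        rw [inner_add_left, real_inner_smul_left]
      rw [h1]
      have := hkey y hy
      linarith
    have hcontr := hgreat.2 ⟨A₀ + t • q, b₀ - t * c, hAdm', rfl⟩
    have h1 : (inner ℝ (A₀ + t • q) x₀ : ℝ) = (inner ℝ A₀ x₀ : ℝ) + t * (inner ℝ q x₀ : ℝ) := by
      rw [inner_add_left, real_inner_smul_left]
    rw [h1] at hcontr
    have h2 : c < (inner ℝ q x₀ : ℝ) := by rw [hqv]; exact hfc2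
    have h3 : 0 < t * ((inner ℝ q x₀ : ℝ) - c) := mul_pos htpos (by linarith)
    linarith
  -- x₀ is not an extreme point of the hull, giving a segment
  have hx₀notF : x₀ ∉ frontier Ω := by
    intro h
    rw [hΩcl.frontier_eq] at h
    exact h.2 hx₀
  have hx₀notK : x₀ ∉ K := fun h => hx₀notF (hKF h)
  have hnotex : x₀ ∉ (convexHull ℝ K).extremePoints ℝ :=
    fun h => hx₀notK (extremePoints_convexHull_subset h)
  rw [mem_extremePoints] at hnotex
  push_neg at hnotex
  obtain ⟨x₁, hx₁, x₂, hx₂, hseg, hne12⟩ := hnotex hx₀K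
  obtain ⟨a, b, ha, hb, hab, hx⟩ := hseg
  have hx₁ne : x₁ ≠ x₀ := by
    intro h
    have hx' : a • x₀ + b • x₂ = x₀ := by have h2 := hx; rw [h] at h2; exact h2
    have key : b • x₂ = b • x₀ := by
      calc b • x₂ = (a • x₀ + b • x₂) - a • x₀ := by abel
        _ = x₀ - a • x₀ := by rw [hx']
        _ = (1 - a) • x₀ := by rw [sub_smul, one_smul]
        _ = b • x₀ := by rw [show (1:ℝ) - a = b by linarith]
    have hx₂e : x₂ = x₀ := smul_right_injective _ (ne_of_gt hb) key
    exact hne12 h hx₂e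
  have hx₂ne : x₂ ≠ x₀ := by
    intro h
    have hx' : a • x₁ + b • x₀ = x₀ := by have h2 := hx; rw [h] at h2; exact h2
    have key : a • x₁ = a • x₀ := by
      calc a • x₁ = (a • x₁ + b • x₀) - b • x₀ := by abel
        _ = x₀ - b • x₀ := by rw [hx']
        _ = (1 - b) • x₀ := by rw [sub_smul, one_smul]
        _ = a • x₀ := by rw [show (1:ℝ) - b = a by linarith]
    have hx₁e : x₁ = x₀ := smul_right_injective _ (ne_of_gt ha) key
    exact hne12 hx₁e h
  have hx₁₂ : x₁ ≠ x₂ := by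
    intro h
    apply hx₁ne
    rw [← hx, h, ← add_smul, hab, one_smul]
  -- u agrees with the affine map on the hull
  have huℓ : ∀ x ∈ convexHull ℝ K, u x = (inner ℝ A₀ x : ℝ) + b₀ := by
    intro x hx'
    have hxΩ : x ∈ Ω := hKΩ hx'
    refine le_antisymm ?_ (hul x hxΩ A₀ b₀ hAdmA₀)
    refine huu x hxΩ _ ?_
    intro A b hA
    have hsub : K ⊆ {z : (EuclideanSpace ℝ (Fin n)) | (inner ℝ A z : ℝ) + b ≤ (inner ℝ A₀ z : ℝ) + b₀} := by
      intro y hy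
      have h1 : (inner ℝ A y : ℝ) + b ≤ g y := hA y hy.1
      rw [mem_setOf_eq, hy.2]
      exact h1
    have hconv : Convex ℝ {z : (EuclideanSpace ℝ (Fin n)) | (inner ℝ A z : ℝ) + b ≤ (inner ℝ A₀ z : ℝ) + b₀} := by
      have heq : {z : (EuclideanSpace ℝ (Fin n)) | (inner ℝ A z : ℝ) + b ≤ (inner ℝ A₀ z : ℝ) + b₀} =
          {z : (EuclideanSpace ℝ (Fin n)) | (inner ℝ (A - A₀) z : ℝ) ≤ b₀ - b} := by
        ext z
        rw [mem_setOf_eq, mem_setOf_eq, inner_sub_left]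
        constructor <;> intro <;> linarith
      rw [heq]
      exact convex_halfSpace_le
        ⟨fun z w => inner_add_right _ _ _, fun r z => real_inner_smul_right _ _ _⟩ _
    exact convexHull_min hsub hconv hx'
  -- construct the direction and conclude
  set w : (EuclideanSpace ℝ (Fin n)) := x₂ - x₁ with hw
  have hwne : w ≠ 0 := sub_ne_zero.2 (Ne.symm hx₁₂)
  set L : ℝ := ‖w‖ with hL
  have hLpos : 0 < L := norm_pos_iff.2 hwne
  set v : (EuclideanSpace ℝ (Fin n)) := L⁻¹ • w with hv
  have hvnorm : ‖v‖ = 1 := by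
    rw [hv, norm_smul, norm_inv, Real.norm_of_nonneg (norm_nonneg w)]
    field_simp [hL]
  have hx₀eq : x₀ = x₁ + b • w := by
    rw [hw, smul_sub, ← hx]
    have : a = 1 - b := by linarith
    rw [this]
    module
  set δ : ℝ := min a b * L with hδ
  have hδpos : 0 < δ := mul_pos (lt_min ha hb) hLpos
  have hform : ∀ t ∈ Icc (-δ) δ, u (x₀ + t • v) = (inner ℝ A₀ v : ℝ) * t
      + ((inner ℝ A₀ x₀ : ℝ) + b₀) := by
    intro t ht
    have hs : x₀ + t • v = x₁ + (b + t / L) • w := by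
      rw [hx₀eq, hv, smul_smul, add_smul]
      rw [div_eq_mul_inv]
      abel
    have hsb : b + t / L ∈ Icc (0:ℝ) 1 := by
      obtain ⟨ht1, ht2⟩ := ht
      have hmin : min a b ≤ a := min_le_left _ _
      have hmin2 : min a b ≤ b := min_le_right _ _
      have h1 : -(min a b) ≤ t / L := by
        rw [neg_le, ← neg_div]
        rw [div_le_iff₀ hLpos]
        calc -t ≤ δ := by linarith
          _ = min a b * L := hδ
      have h2 : t / L ≤ min a b := by
        rw [div_le_iff₀ hLpos]
        calc t ≤ δ := ht2
          _ = min a b * L := hδ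
      constructor <;> [linarith; linarith]
    have hmem : x₀ + t • v ∈ convexHull ℝ K := by
      rw [hs]
      have hseg' : x₁ + (b + t / L) • w ∈ segment ℝ x₁ x₂ := by
        refine ⟨1 - (b + t / L), b + t / L, by linarith [hsb.2], hsb.1, by ring, ?_⟩
        rw [hw]
        module
      exact (convex_convexHull ℝ K).segment_subset hx₁ hx₂ hseg'
    rw [huℓ _ hmem, inner_add_right, real_inner_smul_right]
    ring
  refine ⟨v, hvnorm, δ, hδpos, ⟨(inner ℝ A₀ v : ℝ), (inner ℝ A₀ x₀ : ℝ) + b₀, hform⟩, ?_⟩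
  have hevent : ∀ᶠ h in nhdsWithin 0 (Ioi 0),
      (0:ℝ) = (u (x₀ + h • v) + u (x₀ - h • v) - 2 * u x₀) / h ^ 2 := by
    filter_upwards [Ioo_mem_nhdsGT_of_mem (show (0:ℝ) ∈ Ico 0 δ from ⟨le_refl _, hδpos⟩)]
      with h hh
    obtain ⟨hh1, hh2⟩ := hh
    have h1 : u (x₀ + h • v) = (inner ℝ A₀ v : ℝ) * h + ((inner ℝ A₀ x₀ : ℝ) + b₀) :=
      hform h ⟨by linarith, hh2.le⟩
    have h2 : u (x₀ - h • v) = (inner ℝ A₀ v : ℝ) * (-h) + ((inner ℝ A₀ x₀ : ℝ) + b₀) := by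
      rw [sub_eq_add_neg, ← neg_smul]
      exact hform (-h) ⟨by linarith, by linarith⟩
    rw [h1, h2, hux₀]
    have : (inner ℝ A₀ v : ℝ) * h + ((inner ℝ A₀ x₀ : ℝ) + b₀)
        + ((inner ℝ A₀ v : ℝ) * (-h) + ((inner ℝ A₀ x₀ : ℝ) + b₀))
        - 2 * ((inner ℝ A₀ x₀ : ℝ) + b₀) = 0 := by ring
    rw [this, zero_div]
  exact Filter.Tendsto.congr' hevent tendsto_const_nhds
end

section
/- Let B₁ be the closed unit ball in ℝⁿ with boundary sphere S₁, let α ∈ (0,1], let K > 0, and let G : ℝⁿ → ℝ be continuously differentiable with |G(x)| ≤ K, |∇G(x)| ≤ K, and |∇G(x) − ∇G(y)| ≤ K|x−y|^α for all x, y. Let g be the restriction of G to S₁ and let u be the convex envelope of the boundary data g on B₁. Then u is differentiable at every point of the open ball B_{1/2} of radius 1/2, and there is a constant C depending only on the dimension n and on α such that |∇u(x₁) − ∇u(x₂)| ≤ C K |x₁ − x₂|^α for all x₁, x₂ ∈ B_{1/2}; that is, u is C^{1,α} in B_{1/2} with ‖u‖_{C^{1,α}(B_{1/2})} ≤ C‖g‖_{C^{1,α}(∂B₁)}.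 -/
open Metric Real

namespace CEnv
variable {E : Type*} [NormedAddCommGroup E] [InnerProductSpace ℝ E]
local notation "⟪" x ", " y "⟫" => @inner ℝ _ _ x y

def Feas (G : E → ℝ) (A : E) (b : ℝ) : Prop :=
  ∀ y ∈ Metric.sphere (0 : E) 1, ⟪A, y⟫ + b ≤ G y

def Vals (G : E → ℝ) (x : E) : Set ℝ :=
  {r : ℝ | ∃ A b, Feas G A b ∧ r = ⟪A, x⟫ + b}

variable {K α : ℝ} {G : E → ℝ}

theorem feas_val (hG : ∀ x, |G x| ≤ K) {y₀ : E} (hy₀ : ‖y₀‖ = 1)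
    {A : E} {b : ℝ} (hf : Feas G A b) {x : E} (hx : ‖x‖ ≤ 1) :
    ⟪A, x⟫ + b ≤ K - ‖A‖ * (1 - ‖x‖) := by
  rcases eq_or_ne A 0 with rfl | hA
  · have h1 : ⟪(0:E), y₀⟫ + b ≤ G y₀ := hf y₀ (by simp [mem_sphere_zero_iff_norm, hy₀])
    have h2 := (abs_le.1 (hG y₀)).2
    simp only [inner_zero_left, norm_zero] at h1 ⊢
    nlinarith
  · have hAn : (0:ℝ) < ‖A‖ := norm_pos_iff.mpr hA
    set y : E := ‖A‖⁻¹ • A with hy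
    have hyS : y ∈ Metric.sphere (0:E) 1 := by
      simp [hy, mem_sphere_zero_iff_norm, norm_smul, abs_of_pos (inv_pos.mpr hAn),
        inv_mul_cancel₀ hAn.ne']
    have h1 : ⟪A, y⟫ + b ≤ G y := hf y hyS
    have h2 : ⟪A, y⟫ = ‖A‖ := by
      rw [hy, real_inner_smul_right, real_inner_self_eq_norm_sq]
      field_simp
    have h3 := (abs_le.1 (hG y)).2
    have h4 : ⟪A, x⟫ ≤ ‖A‖ * ‖x‖ := real_inner_le_norm A x
    nlinarith

theorem negK_mem (hG : ∀ x, |G x| ≤ K) (x : E) : -K ∈ Vals G x := by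
  refine ⟨0, -K, fun y _ => ?_, by simp⟩
  have := (abs_le.1 (hG y)).1
  simp only [inner_zero_left]
  linarith

theorem vals_bddAbove (hG : ∀ x, |G x| ≤ K) {y₀ : E} (hy₀ : ‖y₀‖ = 1)
    {x : E} (hx : ‖x‖ ≤ 1) : Vals G x ⊆ Set.Iic K := by
  rintro r ⟨A, b, hf, rfl⟩
  have := feas_val hG hy₀ hf hx
  have : ‖A‖ * (1 - ‖x‖) ≥ 0 := mul_nonneg (norm_nonneg _) (by linarith)
  simp only [Set.mem_Iic]
  linarith [feas_val hG hy₀ hf hx]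

theorem exists_max [FiniteDimensional ℝ E] (hK : 0 < K) (hG : ∀ x, |G x| ≤ K)
    {y₀ : E} (hy₀ : ‖y₀‖ = 1) {ρ : ℝ} (hρ : ρ < 1) (hρ0 : 0 ≤ ρ)
    {x : E} (hx : ‖x‖ ≤ ρ) :
    ∃ A b, Feas G A b ∧ IsGreatest (Vals G x) (⟪A, x⟫ + b) ∧ ‖A‖ * (1 - ρ) ≤ 2 * K := by
  have hx1 : ‖x‖ ≤ 1 := hx.trans hρ.le
  set T : Set (E × ℝ) := {p | Feas G p.1 p.2 ∧ -K ≤ ⟪p.1, x⟫ + p.2} with hT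
  have hcont : Continuous fun p : E × ℝ => ⟪p.1, x⟫ + p.2 := by
    exact ((continuous_inner.comp (continuous_fst.prodMk continuous_const))).add continuous_snd
  have hTclosed : IsClosed T := by
    have h1 : IsClosed {p : E × ℝ | Feas G p.1 p.2} := by
      have he : {p : E × ℝ | Feas G p.1 p.2}
          = ⋂ (y ∈ Metric.sphere (0:E) 1), {p : E × ℝ | ⟪p.1, y⟫ + p.2 ≤ G y} := by
        ext p; simp [Feas, Set.mem_iInter]
      rw [he]
      refine isClosed_biInter fun y _ => isClosed_le ?_ continuous_const
      exact ((continuous_inner.comp (continuous_fst.prodMk continuous_const))).add continuous_snd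
    exact h1.inter (isClosed_le continuous_const hcont)
  have hTsub : T ⊆ Metric.closedBall 0 (K + 2 * K / (1 - ρ)) := by
    rintro ⟨A, b⟩ ⟨hf, hv⟩
    have h1 := feas_val hG hy₀ hf hx1
    have hA : ‖A‖ * (1 - ρ) ≤ 2 * K := by nlinarith [norm_nonneg A]
    have hAn : ‖A‖ ≤ 2 * K / (1 - ρ) := (le_div_iff₀ (by linarith)).mpr hA
    have hip : |⟪A, x⟫| ≤ ‖A‖ := by
      calc |⟪A, x⟫| ≤ ‖A‖ * ‖x‖ := abs_real_inner_le_norm A x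
        _ ≤ ‖A‖ * 1 := by nlinarith [norm_nonneg A]
        _ = ‖A‖ := mul_one _
    have hb : |b| ≤ K + ‖A‖ := by
      rcases abs_le.1 hip with ⟨hi1, hi2⟩
      have h2 : ⟪A, x⟫ + b ≤ K := by nlinarith [norm_nonneg A]
      rw [abs_le]; constructor <;> nlinarith
    simp only [Metric.mem_closedBall, dist_zero_right]
    rw [Prod.norm_def]
    refine max_le ?_ ?_
    · linarith [abs_nonneg b, hb]
    · simp only [Real.norm_eq_abs]; linarith
  have hTcpt : IsCompact T := Metric.isCompact_of_isClosed_isBounded hTclosed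
    (Metric.isBounded_closedBall.subset hTsub)
  have hTne : T.Nonempty := ⟨(0, -K), fun y _ => by
      simpa using (abs_le.1 (hG y)).1, by simp⟩
  obtain ⟨p, hpT, hmax⟩ := hTcpt.exists_isMaxOn hTne hcont.continuousOn
  refine ⟨p.1, p.2, hpT.1, ⟨⟨p.1, p.2, hpT.1, rfl⟩, ?_⟩, ?_⟩
  · rintro r ⟨A, b, hf, rfl⟩
    by_cases hr : -K ≤ ⟪A, x⟫ + b
    · exact hmax (show (A, b) ∈ T from ⟨hf, hr⟩)
    · push_neg at hr
      exact hr.le.trans hpT.2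
  · have h1 := feas_val hG hy₀ hpT.1 hx1
    have h2 := hpT.2
    nlinarith [norm_nonneg p.1]

theorem taylor (hα : 0 < α) (hα1 : α ≤ 1) (hK : 0 < K) (hG : ContDiff ℝ 1 G)
    (hHol : ∀ x y : E, ‖fderiv ℝ G x - fderiv ℝ G y‖ ≤ K * ‖x - y‖ ^ α)
    (y y' : E) : |G y - G y' - fderiv ℝ G y' (y - y')| ≤ K * ‖y - y'‖ ^ (1 + α) := by
  have hdiff : ∀ z : E, DifferentiableAt ℝ G z := fun z => (hG.differentiable one_ne_zero).differentiableAt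
  set L := fderiv ℝ G y' with hL
  set F : E → ℝ := fun z => G z - L z with hF
  have hFd : ∀ z : E, DifferentiableAt ℝ F z := fun z => (hdiff z).sub (L.differentiableAt)
  have hFder : ∀ z : E, fderiv ℝ F z = fderiv ℝ G z - L := by
    intro z
    rw [hF]
    rw [fderiv_fun_sub (hdiff z) L.differentiableAt, L.fderiv]
  rcases eq_or_ne y y' with rfl | hne
  · simp [sub_self, Real.zero_rpow (by positivity : (1:ℝ)+α ≠ 0)]
  · set r := ‖y - y'‖ with hr
    have hrpos : 0 < r := by rw [hr]; exact norm_pos_iff.mpr (sub_ne_zero.mpr hne)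
    have key := Convex.norm_image_sub_le_of_norm_fderiv_le
      (f := F) (C := K * r ^ α) (s := Metric.closedBall y' r)
      (fun z _ => hFd z)
      (fun z hz => by
        rw [hFder z]
        calc ‖fderiv ℝ G z - L‖ ≤ K * ‖z - y'‖ ^ α := hHol z y'
          _ ≤ K * r ^ α := mul_le_mul_of_nonneg_left
              (Real.rpow_le_rpow (norm_nonneg _) (by simpa [dist_eq_norm] using hz) hα.le) hK.le)
      (convex_closedBall y' r)
      (Metric.mem_closedBall_self hrpos.le)
      (show y ∈ Metric.closedBall y' r by simp [Metric.mem_closedBall, dist_eq_norm, hr])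
    have hFy : F y - F y' = G y - G y' - L (y - y') := by
      simp only [hF, map_sub]; ring
    calc |G y - G y' - L (y - y')| = ‖F y - F y'‖ := by rw [hFy]; rfl
      _ ≤ K * r ^ α * r := key
      _ = K * r ^ (1 + α) := by
          rw [add_comm, Real.rpow_add_one hrpos.ne']; ring

theorem le_of_sq_le_sq' {a b : ℝ} (h : a ^ 2 ≤ b ^ 2) (ha : 0 ≤ a) (hb : 0 ≤ b) :
    a ≤ b := by nlinarith

theorem orth_norm_sq {ys τ : E} (hys1 : ‖ys‖ = 1) (hτ1 : ‖τ‖ = 1)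
    (hysτ : ⟪ys, τ⟫ = 0) (a b : ℝ) : ‖a • ys + b • τ‖ ^ 2 = a ^ 2 + b ^ 2 := by
  rw [norm_add_sq_real, real_inner_smul_left, real_inner_smul_right, hysτ,
    norm_smul, norm_smul, hys1, hτ1, Real.norm_eq_abs, Real.norm_eq_abs]
  rw [mul_one, mul_one, sq_abs, sq_abs]
  ring

theorem orth_norm_one {ys τ : E} (hys1 : ‖ys‖ = 1) (hτ1 : ‖τ‖ = 1)
    (hysτ : ⟪ys, τ⟫ = 0) {a b : ℝ} (hab : a ^ 2 + b ^ 2 = 1) : ‖a • ys + b • τ‖ = 1 := by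
  have h := orth_norm_sq hys1 hτ1 hysτ a b
  rw [hab] at h
  nlinarith [norm_nonneg (a • ys + b • τ)]

theorem exists_tangent {e ys : E} (he1 : ‖e‖ = 1) (hys1 : ‖ys‖ = 1)
    (hc78 : |⟪e, ys⟫| ≤ 7/8) :
    ∃ τ : E, ‖τ‖ = 1 ∧ ⟪τ, ys⟫ = 0 ∧ ⟪ys, τ⟫ = 0 ∧ 1/3 ≤ ⟪e, τ⟫ ∧ ⟪e, τ⟫ ≤ 1 := by
  have hee : ⟪e, e⟫ = 1 := by rw [real_inner_self_eq_norm_sq, he1]; norm_num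
  have hysys : ⟪ys, ys⟫ = 1 := by rw [real_inner_self_eq_norm_sq, hys1]; norm_num
  obtain ⟨c, hcdef⟩ : ∃ c : ℝ, c = ⟪e, ys⟫ := ⟨_, rfl⟩
  obtain ⟨eT, heTdef⟩ : ∃ eT : E, eT = e - c • ys := ⟨_, rfl⟩
  have heT_ys : ⟪eT, ys⟫ = 0 := by
    rw [heTdef, inner_sub_left, real_inner_smul_left, hysys, ← hcdef]
    ring
  have heeT : ⟪e, eT⟫ = 1 - c ^ 2 := by
    rw [heTdef, inner_sub_right, real_inner_smul_right, hee, ← hcdef]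
    ring
  have heT2 : ‖eT‖ ^ 2 = 1 - c ^ 2 := by
    rw [heTdef, norm_sub_sq_real, real_inner_smul_right, he1, norm_smul, hys1,
      Real.norm_eq_abs, ← hcdef]
    rw [mul_one, sq_abs]
    ring
  have hc : |c| ≤ 7/8 := by rw [hcdef]; exact hc78
  have hcsq : c ^ 2 ≤ 49/64 := by nlinarith [abs_le.1 hc]
  have heTge : 1/3 ≤ ‖eT‖ := by nlinarith [norm_nonneg eT]
  have heTle : ‖eT‖ ≤ 1 := by nlinarith [norm_nonneg eT]
  have heT0 : ‖eT‖ ≠ 0 := by linarith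
  refine ⟨‖eT‖⁻¹ • eT, ?_, ?_, ?_, ?_, ?_⟩
  · rw [norm_smul, norm_inv, Real.norm_eq_abs, abs_of_nonneg (norm_nonneg _),
      inv_mul_cancel₀ heT0]
  · rw [real_inner_smul_left, heT_ys, mul_zero]
  · rw [real_inner_comm, real_inner_smul_left, heT_ys, mul_zero]
  · rw [real_inner_smul_right, heeT, ← heT2, sq, ← mul_assoc, inv_mul_cancel₀ heT0, one_mul]
    exact heTge
  · rw [real_inner_smul_right, heeT, ← heT2, sq, ← mul_assoc, inv_mul_cancel₀ heT0, one_mul]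
    exact heTle

set_option maxHeartbeats 1000000 in
theorem main_est [FiniteDimensional ℝ E] (hα : 0 < α) (hα1 : α ≤ 1) (hK : 0 < K)
    (hGc : ContDiff ℝ 1 G) (hG' : ∀ x, ‖fderiv ℝ G x‖ ≤ K)
    (hHol : ∀ x y : E, ‖fderiv ℝ G x - fderiv ℝ G y‖ ≤ K * ‖x - y‖ ^ α)
    {y₀ : E} (hy₀ : ‖y₀‖ = 1)
    {x₁ : E} (hx₁ : ‖x₁‖ ≤ 3/4)
    {A₁ : E} {b₁ : ℝ} (hgr : IsGreatest (Vals G x₁) (⟪A₁, x₁⟫ + b₁)) (hf₁ : Feas G A₁ b₁)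
    (hA₁ : ‖A₁‖ ≤ 8 * K)
    {A₂ : E} {b₂ : ℝ} (hf₂ : Feas G A₂ b₂) (hA₂M : ‖A₂ - A₁‖ ≤ 24 * K)
    (hM : 0 < ‖A₂ - A₁‖) :
    ⟪A₂, x₁⟫ + b₂ ≤ ⟪A₁, x₁⟫ + b₁
      - (‖A₂ - A₁‖ / 10) * (‖A₂ - A₁‖ / (300 * K)) ^ (α⁻¹) := by
  obtain ⟨M, hMdef⟩ : ∃ M : ℝ, M = ‖A₂ - A₁‖ := ⟨_, rfl⟩
  rw [← hMdef] at hA₂M hM ⊢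
  obtain ⟨t, htdef⟩ : ∃ t : ℝ, t = (M / (300 * K)) ^ (α⁻¹) := ⟨_, rfl⟩
  rw [← htdef]
  have hbase : 0 < M / (300 * K) := by positivity
  have ht0 : 0 < t := htdef ▸ Real.rpow_pos_of_pos hbase _
  have htα : t ^ α = M / (300 * K) := by
    rw [htdef, ← Real.rpow_mul hbase.le, inv_mul_cancel₀ hα.ne', Real.rpow_one]
  have ht13 : t ≤ 1 / 3 := by
    have h1 : t ≤ (1/3 : ℝ) ^ (α⁻¹) := by
      rw [htdef]
      apply Real.rpow_le_rpow hbase.le _ (by positivity)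
      rw [div_le_iff₀ (by positivity)]
      linarith
    have h2 : ((1:ℝ)/3) ^ (α⁻¹) ≤ ((1:ℝ)/3) ^ (1:ℝ) := by
      apply Real.rpow_le_rpow_of_exponent_ge (by norm_num) (by norm_num)
      exact (one_le_inv₀ hα).mpr hα1
    rw [Real.rpow_one] at h2
    linarith
  have ht1 : t ≤ 1 := by linarith
  have ht1α : t ^ ((1:ℝ) + α) = t * (M / (300 * K)) := by
    rw [Real.rpow_add ht0, Real.rpow_one, htα]
  have htsq : t ^ 2 ≤ t * (M / (300 * K)) := by
    have h3 : t ^ (2:ℝ) ≤ t ^ ((1:ℝ) + α) :=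
      Real.rpow_le_rpow_of_exponent_ge ht0 ht1 (by linarith)
    have h4 : t ^ (2:ℝ) = t ^ 2 := by
      rw [show ((2:ℝ)) = ((2:ℕ) : ℝ) by norm_num, Real.rpow_natCast]
    rw [h4, ht1α] at h3
    exact h3
  obtain ⟨s, hsdef⟩ : ∃ s : ℝ, s = M * t / 100 := ⟨_, rfl⟩
  have hs0 : 0 < s := by rw [hsdef]; positivity
  have hMne : M ≠ 0 := hM.ne'
  obtain ⟨e, he1, hMe⟩ : ∃ e : E, ‖e‖ = 1 ∧ A₂ - A₁ = M • e := by
    refine ⟨M⁻¹ • (A₂ - A₁), ?_, ?_⟩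
    · rw [norm_smul, norm_inv, Real.norm_eq_abs, abs_of_pos hM, ← hMdef,
        inv_mul_cancel₀ hMne]
    · rw [smul_smul, mul_inv_cancel₀ hMne, one_smul]
  -- maximizer of the tilt functional on the sphere
  have hψc : Continuous (fun y : E => s * ⟪e, y⟫ - (G y - (⟪A₁, y⟫ + b₁))) := by
    refine (continuous_const.mul ?_).sub ((hGc.continuous).sub (Continuous.add ?_ continuous_const))
    · exact (innerSL ℝ e).continuous
    · exact (innerSL ℝ A₁).continuous
  have hSne : (Metric.sphere (0:E) 1).Nonempty := ⟨y₀, by simp [mem_sphere_zero_iff_norm, hy₀]⟩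
  obtain ⟨ys, hysS, hysmax0⟩ := (isCompact_sphere (0:E) 1).exists_isMaxOn hSne hψc.continuousOn
  have hys1 : ‖ys‖ = 1 := mem_sphere_zero_iff_norm.mp hysS
  have hysmax : ∀ y ∈ Metric.sphere (0:E) 1,
      s * ⟪e, y⟫ - (G y - (⟪A₁, y⟫ + b₁)) ≤ s * ⟪e, ys⟫ - (G ys - (⟪A₁, ys⟫ + b₁)) :=
    fun y hy => hysmax0 hy
  obtain ⟨Hs, hHsdef⟩ : ∃ Hs : ℝ, Hs = G ys - (⟪A₁, ys⟫ + b₁) := ⟨_, rfl⟩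
  have hHs0 : 0 ≤ Hs := by
    have := hf₁ ys hysS
    rw [hHsdef]; linarith
  -- the tilted competitor is feasible, hence its value at x₁ is at most the max
  have hfeast : Feas G (A₁ + s • e) (b₁ - (s * ⟪e, ys⟫ - Hs)) := by
    intro y hy
    have h1 := hysmax y hy
    rw [inner_add_left, real_inner_smul_left, hHsdef]
    linarith
  have hval : ⟪A₁ + s • e, x₁⟫ + (b₁ - (s * ⟪e, ys⟫ - Hs)) ≤ ⟪A₁, x₁⟫ + b₁ :=
    hgr.2 ⟨A₁ + s • e, b₁ - (s * ⟪e, ys⟫ - Hs), hfeast, rfl⟩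
  have key1 : Hs + s * ⟪e, x₁⟫ ≤ s * ⟪e, ys⟫ := by
    rw [inner_add_left, real_inner_smul_left] at hval
    linarith
  have hex₁ : |⟪e, x₁⟫| ≤ 3/4 := by
    calc |⟪e, x₁⟫| ≤ ‖e‖ * ‖x₁‖ := abs_real_inner_le_norm e x₁
      _ ≤ 3/4 := by rw [he1, one_mul]; exact hx₁
  have heys_le : ⟪e, ys⟫ ≤ 1 := by
    have := real_inner_le_norm e ys
    rw [he1, hys1] at this; linarith
  have hexys : ⟪e, x₁⟫ ≤ ⟪e, ys⟫ := by
    have h2 : s * ⟪e, x₁⟫ ≤ s * ⟪e, ys⟫ := by linarith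
    exact le_of_mul_le_mul_left (by linarith) hs0
  have heys_ge : -(3/4) ≤ ⟪e, ys⟫ := by
    have := (abs_le.1 hex₁).1
    linarith
  have hHs2s : Hs ≤ 2 * s := by
    have h1 : s * ⟪e, ys⟫ ≤ s * 1 := mul_le_mul_of_nonneg_left heys_le hs0.le
    have h2 : s * (-(3/4)) ≤ s * ⟪e, x₁⟫ := mul_le_mul_of_nonneg_left (abs_le.1 hex₁).1 hs0.le
    linarith
  -- value of the competitor L₂ relative to L₁
  have hv : ∀ z : E, ⟪A₂, z⟫ + b₂ - (⟪A₁, z⟫ + b₁) = M * ⟪e, z⟫ + (b₂ - b₁) := by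
    intro z
    have h0 : ⟪A₂ - A₁, z⟫ = M * ⟪e, z⟫ := by rw [hMe, real_inner_smul_left]
    rw [inner_sub_left] at h0
    linarith
  have hvx₁0 : M * ⟪e, x₁⟫ + (b₂ - b₁) ≤ 0 := by
    have h1 : ⟪A₂, x₁⟫ + b₂ ≤ ⟪A₁, x₁⟫ + b₁ := hgr.2 ⟨A₂, b₂, hf₂, rfl⟩
    have := hv x₁
    linarith
  rw [show ⟪A₂, x₁⟫ + b₂ = (⟪A₁, x₁⟫ + b₁) + (M * ⟪e, x₁⟫ + (b₂ - b₁)) by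
    have := hv x₁; linarith]
  have main : M * ⟪e, x₁⟫ + (b₂ - b₁) ≤ -(M / 10 * t) := by
    by_cases hcase : ⟪e, ys⟫ ≤ 7/8
    · -- Case 1
      have hc78 : |⟪e, ys⟫| ≤ 7/8 := abs_le.mpr ⟨by linarith, hcase⟩
      obtain ⟨τ, hτ1, hτys, hysτ, hq13, hq1⟩ := exists_tangent he1 hys1 hc78
      -- first-order condition at the maximum
      have hYS : ∀ θ : ℝ, Real.cos θ • ys + Real.sin θ • τ ∈ Metric.sphere (0:E) 1 := by
        intro θ
        rw [mem_sphere_zero_iff_norm]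
        exact orth_norm_one hys1 hτ1 hysτ (by linarith [Real.sin_sq_add_cos_sq θ])
      have hY0 : Real.cos 0 • ys + Real.sin 0 • τ = ys := by simp
      have hYd : HasDerivAt (fun θ : ℝ => Real.cos θ • ys + Real.sin θ • τ) τ 0 := by
        have h1 : HasDerivAt (fun θ : ℝ => Real.cos θ • ys) ((-Real.sin 0) • ys) 0 :=
          (Real.hasDerivAt_cos 0).smul_const ys
        have h2 : HasDerivAt (fun θ : ℝ => Real.sin θ • τ) ((Real.cos 0) • τ) 0 :=
          (Real.hasDerivAt_sin 0).smul_const τ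
        have h3 := h1.add h2
        simp only [Real.sin_zero, Real.cos_zero, neg_zero, zero_smul, one_smul, zero_add] at h3
        exact h3
      have hGYd : HasDerivAt (fun θ : ℝ => G (Real.cos θ • ys + Real.sin θ • τ))
          (fderiv ℝ G ys τ) 0 := by
        have h1 : HasFDerivAt G (fderiv ℝ G ys) (Real.cos 0 • ys + Real.sin 0 • τ) := by
          rw [hY0]
          exact ((hGc.differentiable one_ne_zero) ys).hasFDerivAt
        exact h1.comp_hasDerivAt 0 hYd
      have hIA : HasDerivAt (fun θ : ℝ => ⟪A₁, Real.cos θ • ys + Real.sin θ • τ⟫) ⟪A₁, τ⟫ 0 :=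
        (innerSL ℝ A₁).hasFDerivAt.comp_hasDerivAt 0 hYd
      have hIe : HasDerivAt (fun θ : ℝ => ⟪e, Real.cos θ • ys + Real.sin θ • τ⟫) ⟪e, τ⟫ 0 :=
        (innerSL ℝ e).hasFDerivAt.comp_hasDerivAt 0 hYd
      have hφd : HasDerivAt (fun θ : ℝ => s * ⟪e, Real.cos θ • ys + Real.sin θ • τ⟫
            - (G (Real.cos θ • ys + Real.sin θ • τ)
              - (⟪A₁, Real.cos θ • ys + Real.sin θ • τ⟫ + b₁)))
          (s * ⟪e, τ⟫ - (fderiv ℝ G ys τ - ⟪A₁, τ⟫)) 0 :=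
        (hIe.const_mul s).sub (hGYd.sub (hIA.add_const b₁))
      have hφmax : IsLocalMax (fun θ : ℝ => s * ⟪e, Real.cos θ • ys + Real.sin θ • τ⟫
            - (G (Real.cos θ • ys + Real.sin θ • τ)
              - (⟪A₁, Real.cos θ • ys + Real.sin θ • τ⟫ + b₁))) 0 := by
        apply Filter.Eventually.of_forall
        intro θ
        have h1 := hysmax _ (hYS θ)
        simp only [hY0]
        exact h1
      have hD0 := hφmax.hasDerivAt_eq_zero hφd
      have hLagr : fderiv ℝ G ys τ - ⟪A₁, τ⟫ = s * ⟪e, τ⟫ := by linarith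
      -- Taylor estimate at the point yt
      obtain ⟨yt, hytdef⟩ : ∃ yt : E, yt = Real.cos t • ys + Real.sin t • τ := ⟨_, rfl⟩
      have hytS : yt ∈ Metric.sphere (0:E) 1 := by rw [hytdef]; exact hYS t
      have hcos_ge : 1 - t ^ 2 / 2 ≤ Real.cos t := Real.one_sub_sq_div_two_le_cos
      have hcos_le : Real.cos t ≤ 1 := Real.cos_le_one t
      have hsin_le : Real.sin t ≤ t := Real.sin_le ht0.le
      have hsin_ge : t * (35/36) ≤ Real.sin t := by
        have h0 := Real.sin_gt_sub_cube ht0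
        have htt : t * t ≤ (1/3) * (1/3) := mul_le_mul ht13 ht13 ht0.le (by norm_num)
        have htt3 : t * (t * t) ≤ t * (1/9) := mul_le_mul_of_nonneg_left (by linarith) ht0.le
        linarith [htt3, h0]
      have hsin_nonneg : 0 ≤ Real.sin t := by linarith [hsin_ge, mul_pos ht0 (by norm_num : (0:ℝ) < 35/36)]
      have hyts_decomp : yt - ys = (Real.cos t - 1) • ys + Real.sin t • τ := by
        rw [hytdef, sub_smul, one_smul]
        abel
      have hyts_sq : ‖yt - ys‖ ^ 2 = (Real.cos t - 1) ^ 2 + Real.sin t ^ 2 := by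
        rw [hyts_decomp]
        exact orth_norm_sq hys1 hτ1 hysτ _ _
      have hyts_le : ‖yt - ys‖ ≤ t := by
      -- (cos t - 1)^2 + sin^2 = 2(1-cos t) ≤ t^2
        have h1 : ‖yt - ys‖ ^ 2 ≤ t ^ 2 := by
          rw [hyts_sq]
          linarith [Real.sin_sq_add_cos_sq t, hcos_ge]
        exact le_of_sq_le_sq' h1 (norm_nonneg _) ht0.le
      have htay := taylor hα hα1 hK hGc hHol yt ys
      have htay2 : G yt - G ys - fderiv ℝ G ys (yt - ys) ≤ K * (t * (M / (300 * K))) := by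
        have h1 : K * ‖yt - ys‖ ^ ((1:ℝ) + α) ≤ K * t ^ ((1:ℝ) + α) := by
          apply mul_le_mul_of_nonneg_left _ hK.le
          exact Real.rpow_le_rpow (norm_nonneg _) hyts_le (by positivity)
        rw [ht1α] at h1
        have := (abs_le.1 htay).2
        linarith
      have hfd_decomp : fderiv ℝ G ys (yt - ys)
          = (Real.cos t - 1) * (fderiv ℝ G ys ys) + Real.sin t * (fderiv ℝ G ys τ) := by
        rw [hyts_decomp, map_add, map_smul, map_smul]
        simp [smul_eq_mul]
      have hiA_decomp : ⟪A₁, yt - ys⟫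
          = (Real.cos t - 1) * ⟪A₁, ys⟫ + Real.sin t * ⟪A₁, τ⟫ := by
        rw [hyts_decomp, inner_add_right, real_inner_smul_right, real_inner_smul_right]
      have hie_decomp : ⟪e, yt - ys⟫ = (Real.cos t - 1) * ⟪e, ys⟫ + Real.sin t * ⟪e, τ⟫ := by
        rw [hyts_decomp, inner_add_right, real_inner_smul_right, real_inner_smul_right]
      have hfdys_bd : |fderiv ℝ G ys ys| ≤ K := by
        have h1 : |fderiv ℝ G ys ys| ≤ ‖fderiv ℝ G ys‖ * ‖ys‖ := (fderiv ℝ G ys).le_opNorm ys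
        rw [hys1, mul_one] at h1
        exact h1.trans (hG' ys)
      have hiA_bd : |⟪A₁, ys⟫| ≤ 8 * K := by
        have := abs_real_inner_le_norm A₁ ys
        rw [hys1, mul_one] at this
        linarith
      -- upper bound for the obstacle at yt
      have hupper : G yt - (⟪A₁, yt⟫ + b₁)
          ≤ Hs + (1 - Real.cos t) * (9 * K) + s * t + K * (t * (M / (300 * K))) := by
        have h2 : fderiv ℝ G ys (yt - ys) - ⟪A₁, yt - ys⟫
            = (Real.cos t - 1) * (fderiv ℝ G ys ys - ⟪A₁, ys⟫) + Real.sin t * (s * ⟪e, τ⟫) := by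
          rw [hfd_decomp, hiA_decomp, ← hLagr]
          ring
        have h3 : (Real.cos t - 1) * (fderiv ℝ G ys ys - ⟪A₁, ys⟫)
            ≤ (1 - Real.cos t) * (9 * K) := by
          have hb : -(9 * K) ≤ fderiv ℝ G ys ys - ⟪A₁, ys⟫ := by
            have := (abs_le.1 hfdys_bd).1
            have := (abs_le.1 hiA_bd).2
            linarith
          have := mul_le_mul_of_nonpos_left hb (by linarith : Real.cos t - 1 ≤ 0)
          linarith [this]
        have h4 : Real.sin t * (s * ⟪e, τ⟫) ≤ s * t := by
          have hsq : 0 ≤ s * ⟪e, τ⟫ := mul_nonneg hs0.le (by linarith)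
          have h41 : s * ⟪e, τ⟫ ≤ s * 1 := mul_le_mul_of_nonneg_left hq1 hs0.le
          have h42 : Real.sin t * (s * ⟪e, τ⟫) ≤ t * (s * 1) :=
            mul_le_mul hsin_le h41 hsq ht0.le
          linarith [h42]
        have h5 : ⟪A₁, yt - ys⟫ = ⟪A₁, yt⟫ - ⟪A₁, ys⟫ := by rw [inner_sub_right]
        rw [hHsdef]
        linarith [htay2, h2, h3, h4, h5]
      -- lower bound: feasibility of L₂ at yt
      have hvyt : M * ⟪e, yt⟫ + (b₂ - b₁) ≤ G yt - (⟪A₁, yt⟫ + b₁) := by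
        have h1 := hf₂ yt hytS
        have := hv yt
        linarith
      have hie_yt : ⟪e, yt⟫ = ⟪e, ys⟫ + ((Real.cos t - 1) * ⟪e, ys⟫ + Real.sin t * ⟪e, τ⟫) := by
        have h0 : ⟪e, yt - ys⟫ = ⟪e, yt⟫ - ⟪e, ys⟫ := by rw [inner_sub_right]
        linarith [hie_decomp]
      have hgain : ⟪e, x₁⟫ + t * (17/108) ≤ ⟪e, yt⟫ := by
        have h2 : (Real.cos t - 1) * 1 ≤ (Real.cos t - 1) * ⟪e, ys⟫ :=
          mul_le_mul_of_nonpos_left heys_le (by linarith : Real.cos t - 1 ≤ 0)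
        have h3 : (t * (35/36)) * (1/3) ≤ Real.sin t * ⟪e, τ⟫ :=
          mul_le_mul hsin_ge hq13 (by norm_num) hsin_nonneg
        have htt : t * t ≤ t * (1/3) := mul_le_mul_of_nonneg_left ht13 ht0.le
        have h4 : t ^ 2 / 2 ≤ t * (1/6) := by
          have : t ^ 2 = t * t := sq t
          linarith [htt]
        rw [hie_yt]
        linarith [h2, h3, h4, hexys, hcos_ge]
      -- combine
      have hKt : K * (t * (M / (300 * K))) = M * t / 300 := by field_simp
      have hcos_term : (1 - Real.cos t) * (9 * K) ≤ (9/2) * (M * t / 300) := by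
        have h1 : 1 - Real.cos t ≤ t ^ 2 / 2 := by linarith
        have h5 : (0:ℝ) ≤ 9 * K := by positivity
        calc (1 - Real.cos t) * (9 * K) ≤ (t^2/2) * (9 * K) :=
              mul_le_mul_of_nonneg_right h1 h5
          _ ≤ (t * (M / (300 * K)) / 2) * (9 * K) :=
              mul_le_mul_of_nonneg_right (by linarith [htsq]) h5
          _ = (9/2) * (M * t / 300) := by field_simp
      have hst : s * t ≤ M * t / 300 := by
        have htt : t * t ≤ t * (1/3) := mul_le_mul_of_nonneg_left ht13 ht0.le
        have h1 : M * (t * t) ≤ M * (t * (1/3)) := mul_le_mul_of_nonneg_left htt hM.le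
        rw [hsdef]
        have hexp : M * t / 100 * t = M * (t * t) / 100 := by ring
        linarith [h1]
      have hcomb : M * ⟪e, x₁⟫ + (b₂ - b₁) + M * (t * (17/108))
          ≤ Hs + (1 - Real.cos t) * (9 * K) + s * t + K * (t * (M / (300 * K))) := by
        have h1 : M * (⟪e, x₁⟫ + t * (17/108)) ≤ M * ⟪e, yt⟫ :=
          mul_le_mul_of_nonneg_left hgain hM.le
        have hexp : M * (⟪e, x₁⟫ + t * (17/108)) = M * ⟪e, x₁⟫ + M * (t * (17/108)) := by ring
        linarith [h1, hvyt, hupper]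
      rw [hKt] at hcomb
      have hMt : 0 ≤ M * t := mul_nonneg hM.le ht0.le
      have hHs' : Hs ≤ M * t / 50 := by rw [hsdef] at hHs2s; linarith
      linarith [hcomb, hcos_term, hst, hHs', hMt]
    · -- Case 2
      push_neg at hcase
      have hvys : M * ⟪e, ys⟫ + (b₂ - b₁) ≤ Hs := by
        have h1 := hf₂ ys hysS
        have h2 := hv ys
        rw [hHsdef]
        linarith
      have h2 : M * ⟪e, x₁⟫ + (b₂ - b₁) ≤ Hs - M * (7/8 - 3/4) := by
        have h3 : ⟪e, x₁⟫ ≤ 3/4 := (abs_le.1 hex₁).2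
        have h4 : M * (1/8) ≤ M * (⟪e, ys⟫ - ⟪e, x₁⟫) :=
          mul_le_mul_of_nonneg_left (by linarith) hM.le
        linarith [h4, hvys]
      have h5 : M * t ≤ M * (1/3) := mul_le_mul_of_nonneg_left ht13 hM.le
      have hHs' : Hs ≤ M * t / 50 := by rw [hsdef] at hHs2s; linarith
      linarith [hHs', h5, h2]
  linarith

set_option maxHeartbeats 1000000 in
theorem growth [FiniteDimensional ℝ E] (hα : 0 < α) (hα1 : α ≤ 1) (hK : 0 < K)
    (hGc : ContDiff ℝ 1 G) (hG' : ∀ x, ‖fderiv ℝ G x‖ ≤ K)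
    (hHol : ∀ x y : E, ‖fderiv ℝ G x - fderiv ℝ G y‖ ≤ K * ‖x - y‖ ^ α)
    {y₀ : E} (hy₀ : ‖y₀‖ = 1)
    {x₁ : E} (hx₁ : ‖x₁‖ ≤ 3/4)
    {A₁ : E} {b₁ : ℝ} (hgr : IsGreatest (Vals G x₁) (⟪A₁, x₁⟫ + b₁)) (hf₁ : Feas G A₁ b₁)
    (hA₁ : ‖A₁‖ ≤ 8 * K)
    {x : E} {A₂ : E} {b₂ : ℝ} (hgr₂ : IsGreatest (Vals G x) (⟪A₂, x⟫ + b₂))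
    (hf₂ : Feas G A₂ b₂) (hA₂ : ‖A₂‖ ≤ 16 * K) :
    ⟪A₂, x⟫ + b₂ ≤ ⟪A₁, x⟫ + b₁ + 3000 * K * ‖x - x₁‖ ^ (1 + α) := by
  have hRHS0 : 0 ≤ 3000 * K * ‖x - x₁‖ ^ (1 + α) := by positivity
  rcases eq_or_lt_of_le (norm_nonneg (A₂ - A₁)) with hM0 | hM
  · -- equal slopes
    have hAA : A₂ = A₁ := by
      have := norm_eq_zero.mp hM0.symm
      exact sub_eq_zero.mp this
    subst hAA
    have h1 : ⟪A₂, x₁⟫ + b₂ ≤ ⟪A₂, x₁⟫ + b₁ := hgr.2 ⟨A₂, b₂, hf₂, rfl⟩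
    linarith
  · have hA₂M : ‖A₂ - A₁‖ ≤ 24 * K := by
      calc ‖A₂ - A₁‖ ≤ ‖A₂‖ + ‖A₁‖ := norm_sub_le _ _
        _ ≤ 24 * K := by linarith
    have hme := main_est hα hα1 hK hGc hG' hHol hy₀ hx₁ hgr hf₁ hA₁ hf₂ hA₂M hM
    obtain ⟨M, hMdef⟩ : ∃ M : ℝ, M = ‖A₂ - A₁‖ := ⟨_, rfl⟩
    obtain ⟨δ, hδdef⟩ : ∃ δ : ℝ, δ = ‖x - x₁‖ := ⟨_, rfl⟩
    rw [← hMdef] at hme hM hA₂M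
    rw [← hδdef]
    have hδ0 : 0 ≤ δ := hδdef ▸ norm_nonneg _
    have hip : ⟪A₂ - A₁, x - x₁⟫ ≤ M * δ := by
      rw [hMdef, hδdef]
      exact real_inner_le_norm _ _
    have hsplit : ⟪A₂, x⟫ + b₂ ≤ (⟪A₁, x⟫ + b₁) + (⟪A₂ - A₁, x - x₁⟫
        + ((⟪A₂, x₁⟫ + b₂) - (⟪A₁, x₁⟫ + b₁))) := by
      rw [inner_sub_left, inner_sub_right, inner_sub_right]
      ring_nf
      linarith [le_refl (0:ℝ)]
    -- it suffices to bound M * δ - (M/10) * (M/(300K))^(1/α)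
    have hkey : M * δ - (M / 10) * (M / (300 * K)) ^ (α⁻¹) ≤ 3000 * K * δ ^ (1 + α) := by
      by_cases hMd : M ≤ 3000 * K * δ ^ α
      · have h1 : M * δ ≤ 3000 * K * δ ^ α * δ :=
          mul_le_mul_of_nonneg_right hMd hδ0
        have h2 : 0 ≤ (M / 10) * (M / (300 * K)) ^ (α⁻¹) := by positivity
        rcases eq_or_lt_of_le hδ0 with hδ00 | hδpos
        · rw [← hδ00]
          rw [Real.zero_rpow (by positivity : (1:ℝ) + α ≠ 0)]
          nlinarith [h2]
        · have h3 : δ ^ α * δ = δ ^ ((1:ℝ) + α) := by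
            rw [Real.rpow_add hδpos, Real.rpow_one]; ring
          nlinarith [h1, h2, h3]
      · push_neg at hMd
        have hδα0 : 0 ≤ δ ^ α := Real.rpow_nonneg hδ0 α
        have h10 : ((10:ℝ) * δ) ^ α ≤ 10 * δ ^ α := by
          rw [Real.mul_rpow (by norm_num) hδ0]
          have : (10:ℝ) ^ α ≤ 10 ^ (1:ℝ) := Real.rpow_le_rpow_of_exponent_le (by norm_num) hα1
          rw [Real.rpow_one] at this
          nlinarith [hδα0]
        have h11 : (10 * δ) ^ α ≤ M / (300 * K) := by
          have : 10 * δ ^ α ≤ M / (300 * K) := by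
            rw [le_div_iff₀ (by positivity)]
            nlinarith
          linarith
        have h12 : 10 * δ ≤ (M / (300 * K)) ^ (α⁻¹) := by
          have h13 : ((10 * δ) ^ α) ^ (α⁻¹) ≤ (M / (300 * K)) ^ (α⁻¹) :=
            Real.rpow_le_rpow (Real.rpow_nonneg (by positivity) _) h11 (by positivity)
          rwa [← Real.rpow_mul (by positivity : (0:ℝ) ≤ 10 * δ),
            mul_inv_cancel₀ hα.ne', Real.rpow_one] at h13
        have h14 : (M / 10) * (10 * δ) ≤ (M / 10) * (M / (300 * K)) ^ (α⁻¹) :=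
          mul_le_mul_of_nonneg_left h12 (by positivity)
        have h15 : 0 ≤ 3000 * K * δ ^ ((1:ℝ) + α) := by positivity
        nlinarith [h14]
    have hme2 : (⟪A₂, x₁⟫ + b₂) - (⟪A₁, x₁⟫ + b₁)
        ≤ -((M / 10) * (M / (300 * K)) ^ (α⁻¹)) := by linarith
    linarith [hsplit, hip, hkey, hme2]

set_option maxHeartbeats 1000000 in
theorem envelope_key [FiniteDimensional ℝ E] (hα : 0 < α) (hα1 : α ≤ 1) (hK : 0 < K)
    (hGc : ContDiff ℝ 1 G) (hG : ∀ x, |G x| ≤ K) (hG' : ∀ x, ‖fderiv ℝ G x‖ ≤ K)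
    (hHol : ∀ x y : E, ‖fderiv ℝ G x - fderiv ℝ G y‖ ≤ K * ‖x - y‖ ^ α)
    {y₀ : E} (hy₀ : ‖y₀‖ = 1)
    {u : E → ℝ} (hu : ∀ w ∈ Metric.closedBall (0:E) 1, u w = sSup (Vals G w))
    {z : E} (hz : ‖z‖ ≤ 3/4) :
    ∃ (A : E) (b : ℝ), ‖A‖ ≤ 8 * K ∧ u z = ⟪A, z⟫ + b ∧
      (∀ w : E, ‖w‖ ≤ 1 → ⟪A, w⟫ + b ≤ u w) ∧
      (∀ w : E, ‖w‖ ≤ 7/8 → u w ≤ ⟪A, w⟫ + b + 3000 * K * ‖w - z‖ ^ (1 + α)) ∧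
      HasFDerivAt u (innerSL ℝ A) z := by
  obtain ⟨A, b, hf, hgr, hA2K⟩ :=
    exists_max hK hG hy₀ (by norm_num : (3:ℝ)/4 < 1) (by norm_num) hz
  have hA8 : ‖A‖ ≤ 8 * K := by linarith
  have huz : u z = ⟪A, z⟫ + b := by
    rw [hu z (mem_closedBall_zero_iff.mpr (by linarith))]
    exact hgr.csSup_eq
  have hG1 : ∀ w : E, ‖w‖ ≤ 1 → ⟪A, w⟫ + b ≤ u w := by
    intro w hw
    rw [hu w (mem_closedBall_zero_iff.mpr hw)]
    exact le_csSup ⟨K, fun r hr => vals_bddAbove hG hy₀ hw hr⟩ ⟨A, b, hf, rfl⟩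
  have hG2 : ∀ w : E, ‖w‖ ≤ 7/8 → u w ≤ ⟪A, w⟫ + b + 3000 * K * ‖w - z‖ ^ (1 + α) := by
    intro w hw
    obtain ⟨A₂, b₂, hf₂, hgr₂, hA₂2K⟩ :=
      exists_max hK hG hy₀ (by norm_num : (7:ℝ)/8 < 1) (by norm_num) hw
    have hA₂16 : ‖A₂‖ ≤ 16 * K := by linarith
    rw [hu w (mem_closedBall_zero_iff.mpr (by linarith)), hgr₂.csSup_eq]
    exact growth hα hα1 hK hGc hG' hHol hy₀ hz hgr hf hA8 hgr₂ hf₂ hA₂16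
  refine ⟨A, b, hA8, huz, hG1, hG2, ?_⟩
  rw [hasFDerivAt_iff_isLittleO_nhds_zero, Asymptotics.isLittleO_iff]
  intro c hc
  obtain ⟨ε, hεdef⟩ : ∃ ε : ℝ, ε = min (1/8) ((c / (3000 * K)) ^ (α⁻¹)) := ⟨_, rfl⟩
  have hε0 : 0 < ε := by
    rw [hεdef]
    apply lt_min (by norm_num)
    positivity
  apply Filter.eventually_of_mem (Metric.ball_mem_nhds (0:E) hε0)
  intro h hh
  rw [mem_ball_zero_iff] at hh
  rcases eq_or_ne h 0 with rfl | hne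
  · simp
  · have hh0 : 0 < ‖h‖ := norm_pos_iff.mpr hne
    have hh18 : ‖h‖ ≤ 1/8 := by
      have := hεdef ▸ min_le_left (1/8 : ℝ) ((c / (3000 * K)) ^ (α⁻¹))
      linarith
    have hzh : ‖z + h‖ ≤ 7/8 := by
      calc ‖z + h‖ ≤ ‖z‖ + ‖h‖ := norm_add_le _ _
        _ ≤ 7/8 := by linarith
    have hlow := hG1 (z + h) (by linarith)
    have hupp := hG2 (z + h) hzh
    have hsub : z + h - z = h := by abel
    rw [hsub] at hupp
    have hinner : ⟪A, z + h⟫ = ⟪A, z⟫ + ⟪A, h⟫ := inner_add_right A z h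
    have habs : |u (z + h) - u z - ⟪A, h⟫| ≤ 3000 * K * ‖h‖ ^ ((1:ℝ) + α) := by
      rw [abs_le]
      constructor
      · rw [huz]; linarith [hlow, hinner]
      · rw [huz]; linarith [hupp, hinner]
    have hsplit : (3000 * K) * ‖h‖ ^ ((1:ℝ) + α) = (3000 * K * ‖h‖ ^ α) * ‖h‖ := by
      rw [Real.rpow_add hh0, Real.rpow_one]; ring
    have hhα : 3000 * K * ‖h‖ ^ α ≤ c := by
      have h1 : ‖h‖ ≤ (c / (3000 * K)) ^ (α⁻¹) := by
        have := hεdef ▸ min_le_right (1/8 : ℝ) ((c / (3000 * K)) ^ (α⁻¹))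
        linarith
      have h2 : ‖h‖ ^ α ≤ ((c / (3000 * K)) ^ (α⁻¹)) ^ α :=
        Real.rpow_le_rpow (norm_nonneg _) h1 hα.le
      rw [← Real.rpow_mul (by positivity), inv_mul_cancel₀ hα.ne', Real.rpow_one] at h2
      rw [show c = 3000 * K * (c / (3000 * K)) by field_simp]
      have h3 : 0 < 3000 * K := by positivity
      exact mul_le_mul_of_nonneg_left h2 h3.le
    calc ‖u (z + h) - u z - (innerSL ℝ A) h‖
        = |u (z + h) - u z - ⟪A, h⟫| := rfl
      _ ≤ 3000 * K * ‖h‖ ^ ((1:ℝ) + α) := habs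
      _ = (3000 * K * ‖h‖ ^ α) * ‖h‖ := hsplit
      _ ≤ c * ‖h‖ := mul_le_mul_of_nonneg_right hhα (norm_nonneg _)

end CEnv

set_option maxHeartbeats 1000000 in
/-- Interior C^{1,α} regularity of the convex envelope of C^{1,α} boundary data
on the unit ball: the constant depends only on the dimension and on α. -/
theorem convex_envelope_interior_C1alpha (n : ℕ) (α : ℝ) (hα : 0 < α) (hα1 : α ≤ 1) :
    ∃ C : ℝ, 0 < C ∧ ∀ K : ℝ, 0 < K →
      ∀ G : EuclideanSpace ℝ (Fin n) → ℝ, ContDiff ℝ 1 G →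
      (∀ x, |G x| ≤ K) →
      (∀ x, ‖fderiv ℝ G x‖ ≤ K) →
      (∀ x y, ‖fderiv ℝ G x - fderiv ℝ G y‖ ≤ K * ‖x - y‖ ^ α) →
      ∀ u : EuclideanSpace ℝ (Fin n) → ℝ,
      (∀ x ∈ Metric.closedBall (0 : EuclideanSpace ℝ (Fin n)) 1,
        u x = sSup {r : ℝ | ∃ (A : EuclideanSpace ℝ (Fin n)) (b : ℝ),
          (∀ y ∈ Metric.sphere (0 : EuclideanSpace ℝ (Fin n)) 1,
            (inner ℝ A y : ℝ) + b ≤ G y) ∧ r = (inner ℝ A x : ℝ) + b}) →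
      (∀ x ∈ Metric.ball (0 : EuclideanSpace ℝ (Fin n)) (1/2), DifferentiableAt ℝ u x) ∧
      ∀ x₁ ∈ Metric.ball (0 : EuclideanSpace ℝ (Fin n)) (1/2),
      ∀ x₂ ∈ Metric.ball (0 : EuclideanSpace ℝ (Fin n)) (1/2),
        ‖fderiv ℝ u x₁ - fderiv ℝ u x₂‖ ≤ C * K * ‖x₁ - x₂‖ ^ α := by
  refine ⟨12000, by norm_num, ?_⟩
  intro K hK G hGc hG hG' hHol u hu
  by_cases hn : n = 0
  · subst hn
    haveI : Subsingleton (EuclideanSpace ℝ (Fin 0)) :=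
      ⟨fun a b => WithLp.ofLp_injective 2 (Subsingleton.elim _ _)⟩
    have hueq : u = fun _ => u 0 := funext fun z => congrArg u (Subsingleton.elim z 0)
    constructor
    · intro x _
      rw [hueq]
      exact differentiableAt_const _
    · intro x₁ _ x₂ _
      rw [hueq, fderiv_fun_const]
      simp only [Pi.zero_apply, sub_zero, sub_self, norm_zero]
      positivity
  · obtain ⟨y₀, hy₀⟩ : ∃ y₀ : EuclideanSpace ℝ (Fin n), ‖y₀‖ = 1 :=
      ⟨EuclideanSpace.single ⟨0, Nat.pos_of_ne_zero hn⟩ (1:ℝ), by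
        rw [EuclideanSpace.norm_single]; norm_num⟩
    have hu' : ∀ w ∈ Metric.closedBall (0 : EuclideanSpace ℝ (Fin n)) 1,
        u w = sSup (CEnv.Vals G w) := hu
    have key : ∀ z : EuclideanSpace ℝ (Fin n), ‖z‖ ≤ 3/4 →
        ∃ (A : EuclideanSpace ℝ (Fin n)) (b : ℝ), ‖A‖ ≤ 8 * K ∧
          u z = (inner ℝ A z : ℝ) + b ∧
          (∀ w : EuclideanSpace ℝ (Fin n), ‖w‖ ≤ 1 → (inner ℝ A w : ℝ) + b ≤ u w) ∧
          (∀ w : EuclideanSpace ℝ (Fin n), ‖w‖ ≤ 7/8 →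
            u w ≤ (inner ℝ A w : ℝ) + b + 3000 * K * ‖w - z‖ ^ (1 + α)) ∧
          HasFDerivAt u (innerSL ℝ A) z :=
      fun z hz => CEnv.envelope_key hα hα1 hK hGc hG hG' hHol hy₀ hu' hz
    constructor
    · intro x hx
      rw [mem_ball_zero_iff] at hx
      obtain ⟨A, b, _, _, _, _, hd⟩ := key x (by linarith)
      exact hd.differentiableAt
    · intro x₁ hx₁ x₂ hx₂
      rw [mem_ball_zero_iff] at hx₁ hx₂
      obtain ⟨A₁, b₁, hA₁, hu₁, hG1₁, hG2₁, hd₁⟩ := key x₁ (by linarith)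
      obtain ⟨A₂, b₂, hA₂, hu₂, hG1₂, hG2₂, hd₂⟩ := key x₂ (by linarith)
      rcases eq_or_ne x₁ x₂ with rfl | hne
      · simp [sub_self, Real.zero_rpow hα.ne']
      · rw [hd₁.fderiv, hd₂.fderiv]
        have hsub : innerSL ℝ A₁ - innerSL ℝ A₂ = innerSL ℝ (A₁ - A₂) :=
          (map_sub (innerSL ℝ) A₁ A₂).symm
        rw [hsub, innerSL_apply_norm]
        obtain ⟨d, hddef⟩ : ∃ d : ℝ, d = ‖x₁ - x₂‖ := ⟨_, rfl⟩
        rw [← hddef]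
        have hd0 : 0 < d := hddef ▸ norm_pos_iff.mpr (sub_ne_zero.mpr hne)
        by_cases hd18 : 1/8 ≤ d
        · have h1 : ‖A₁ - A₂‖ ≤ 16 * K := (norm_sub_le _ _).trans (by linarith)
          have h2 : (1/8 : ℝ) ≤ d ^ α := by
            have h3 : ((1:ℝ)/8) ^ α ≤ d ^ α := Real.rpow_le_rpow (by norm_num) hd18 hα.le
            have h4 : ((1:ℝ)/8) ^ (1:ℝ) ≤ ((1:ℝ)/8) ^ α :=
              Real.rpow_le_rpow_of_exponent_ge (by norm_num) (by norm_num) hα1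
            rw [Real.rpow_one] at h4
            linarith
          have h5 : 12000 * K * (1/8 : ℝ) ≤ 12000 * K * d ^ α :=
            mul_le_mul_of_nonneg_left h2 (by positivity)
          linarith
        · push_neg at hd18
          rcases eq_or_lt_of_le (norm_nonneg (A₂ - A₁)) with hM0 | hM
          · have hAA : A₂ = A₁ := sub_eq_zero.mp (norm_eq_zero.mp hM0.symm)
            rw [hAA, sub_self, norm_zero]
            positivity
          · obtain ⟨M, hMdef⟩ : ∃ M : ℝ, M = ‖A₂ - A₁‖ := ⟨_, rfl⟩
            rw [← hMdef] at hM
            have hMne : M ≠ 0 := hM.ne'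
            obtain ⟨z, hzdef⟩ : ∃ z : EuclideanSpace ℝ (Fin n),
                z = x₂ + (d / M) • (A₂ - A₁) := ⟨_, rfl⟩
            have hznorm : ‖(d / M) • (A₂ - A₁)‖ = d := by
              rw [norm_smul, Real.norm_eq_abs, abs_of_pos (by positivity : 0 < d / M),
                ← hMdef]
              field_simp
            have hz78 : ‖z‖ ≤ 7/8 := by
              rw [hzdef]
              calc ‖x₂ + (d / M) • (A₂ - A₁)‖ ≤ ‖x₂‖ + ‖(d / M) • (A₂ - A₁)‖ :=
                    norm_add_le _ _
                _ ≤ 7/8 := by rw [hznorm]; linarith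
            have hzx2 : (inner ℝ (A₂ - A₁) (z - x₂) : ℝ) = d * M := by
              rw [hzdef, add_sub_cancel_left, real_inner_smul_right,
                real_inner_self_eq_norm_sq, ← hMdef]
              field_simp
            have hzx1 : ‖z - x₁‖ ≤ 2 * d := by
              have hz1 : z - x₁ = (x₂ - x₁) + (d / M) • (A₂ - A₁) := by rw [hzdef]; abel
              rw [hz1]
              calc ‖(x₂ - x₁) + (d / M) • (A₂ - A₁)‖
                  ≤ ‖x₂ - x₁‖ + ‖(d / M) • (A₂ - A₁)‖ := norm_add_le _ _
                _ ≤ 2 * d := by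
                    rw [hznorm, norm_sub_rev]
                    rw [← hddef]
                    linarith
            have c1 : (inner ℝ A₂ z : ℝ) + b₂ ≤ u z := hG1₂ z (by linarith)
            have c2 : u z ≤ (inner ℝ A₁ z : ℝ) + b₁ + 3000 * K * ‖z - x₁‖ ^ (1 + α) :=
              hG2₁ z hz78
            have c3 : (inner ℝ A₁ x₂ : ℝ) + b₁ ≤ u x₂ := hG1₁ x₂ (by linarith)
            have hexp : (inner ℝ (A₂ - A₁) (z - x₂) : ℝ)
                = ((inner ℝ A₂ z : ℝ) + b₂) - ((inner ℝ A₂ x₂ : ℝ) + b₂)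
                  - (((inner ℝ A₁ z : ℝ) + b₁) - ((inner ℝ A₁ x₂ : ℝ) + b₁)) := by
              rw [inner_sub_left, inner_sub_right, inner_sub_right]
              ring
            have hMd : M * d ≤ 3000 * K * ‖z - x₁‖ ^ (1 + α) := by
              rw [hexp] at hzx2
              linarith [c1, c2, c3, hu₂, hzx2]
            have h5 : ‖z - x₁‖ ^ ((1:ℝ) + α) ≤ (2 * d) ^ ((1:ℝ) + α) :=
              Real.rpow_le_rpow (norm_nonneg _) hzx1 (by positivity)
            have h6 : ((2:ℝ) * d) ^ ((1:ℝ) + α) = (2:ℝ) ^ ((1:ℝ) + α) * d ^ ((1:ℝ) + α) :=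
              Real.mul_rpow (by norm_num) hd0.le
            have h7 : ((2:ℝ)) ^ ((1:ℝ) + α) ≤ 4 := by
              have h8 : ((2:ℝ)) ^ ((1:ℝ) + α) ≤ (2:ℝ) ^ ((2:ℝ)) :=
                Real.rpow_le_rpow_of_exponent_le (by norm_num) (by linarith)
              have h9 : ((2:ℝ)) ^ ((2:ℝ)) = 4 := by
                rw [show ((2:ℝ)) = ((2:ℕ):ℝ) from by norm_num, Real.rpow_natCast]
                norm_num
              rw [h9] at h8
              exact h8
            have h10 : d ^ ((1:ℝ) + α) = d ^ α * d := by
              rw [Real.rpow_add hd0, Real.rpow_one]; ring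
            have h11 : 0 ≤ d ^ ((1:ℝ) + α) := Real.rpow_nonneg hd0.le _
            have h12 : M * d ≤ 12000 * K * (d ^ α * d) := by
              have h13 : 3000 * K * ‖z - x₁‖ ^ ((1:ℝ) + α)
                  ≤ 3000 * K * ((2:ℝ) ^ ((1:ℝ) + α) * d ^ ((1:ℝ) + α)) := by
                rw [← h6]
                exact mul_le_mul_of_nonneg_left h5 (by positivity)
              have h14 : 3000 * K * ((2:ℝ) ^ ((1:ℝ) + α) * d ^ ((1:ℝ) + α))
                  ≤ 3000 * K * (4 * d ^ ((1:ℝ) + α)) := by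
                have h141 := mul_le_mul_of_nonneg_right h7 h11
                have h15 : (0:ℝ) ≤ 3000 * K := by positivity
                nlinarith [h141, h15]
              calc M * d ≤ 3000 * K * ‖z - x₁‖ ^ ((1:ℝ) + α) := hMd
                _ ≤ 3000 * K * ((2:ℝ) ^ ((1:ℝ) + α) * d ^ ((1:ℝ) + α)) := h13
                _ ≤ 3000 * K * (4 * d ^ ((1:ℝ) + α)) := h14
                _ = 12000 * K * (d ^ α * d) := by rw [h10]; ring
            have h16 : M ≤ 12000 * K * d ^ α := by
              have h17 : M * d ≤ (12000 * K * d ^ α) * d := by linarith [h12]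
              exact le_of_mul_le_mul_right h17 hd0
            have h18 : ‖A₁ - A₂‖ = M := by rw [hMdef, norm_sub_rev]
            linarith [h18 ▸ h16]
end

section
/- There is a constant C₂ ≥ 1, depending only on the dimension n, with the following property. Let P ⊂ ℝⁿ be an affine hyperplane that intersects the open ball of radius 1/2 centered at the origin. Then for every point y on the unit sphere S₁, dist(y, P) ≤ d_{S₁}(y, P ∩ S₁) ≤ C₂ · dist(y, P), where dist(y, P) is the Euclidean distance from y to P and d_{S₁}(y, P ∩ S₁) = inf{arccos⟨y, z⟩ : z ∈ P ∩ S₁} is the geodesic (great-circle) distance on the sphere from y to the set P ∩ S₁. -/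
open Real

lemma chord_le_arc {E : Type*} [NormedAddCommGroup E] [InnerProductSpace ℝ E]
    {y z : E} (hy : ‖y‖ = 1) (hz : ‖z‖ = 1) :
    ‖y - z‖ ≤ Real.arccos (inner ℝ y z : ℝ) := by
  set t : ℝ := inner ℝ y z with ht
  have h1 : |t| ≤ 1 := by simpa [hy, hz] using abs_real_inner_le_norm y z
  rw [abs_le] at h1
  set θ := Real.arccos t with hθ
  have hcos : Real.cos θ = t := Real.cos_arccos h1.1 h1.2
  have hθ0 : 0 ≤ θ := Real.arccos_nonneg t
  have hθπ : θ ≤ π := Real.arccos_le_pi t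
  have hsq : ‖y - z‖ ^ 2 = 2 - 2 * t := by
    rw [norm_sub_sq_real, hy, hz, ← ht]; ring
  have hc2 : Real.cos (2 * (θ/2)) = 2 * Real.cos (θ/2)^2 - 1 := Real.cos_two_mul _
  have hpy : Real.sin (θ/2)^2 + Real.cos (θ/2)^2 = 1 := Real.sin_sq_add_cos_sq _
  have h2 : 2 - 2 * t = (2 * Real.sin (θ/2)) ^ 2 := by
    have : (2:ℝ) * (θ/2) = θ := by ring
    rw [this] at hc2
    nlinarith
  have hsin : Real.sin (θ/2) ≤ θ/2 := by
    have := Real.sin_le (by linarith : 0 ≤ θ/2); linarith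
  have hsinpos : 0 ≤ Real.sin (θ/2) := Real.sin_nonneg_of_nonneg_of_le_pi (by linarith) (by linarith)
  have hnorm : ‖y - z‖ = 2 * Real.sin (θ/2) := by
    have h4 : ‖y - z‖ ^ 2 = (2 * Real.sin (θ/2))^2 := by rw [hsq, h2]
    calc ‖y - z‖ = √(‖y - z‖^2) := by rw [Real.sqrt_sq (norm_nonneg _)]
    _ = √((2 * Real.sin (θ/2))^2) := by rw [h4]
    _ = 2 * Real.sin (θ/2) := Real.sqrt_sq (by linarith)
  rw [hnorm]; linarith

lemma angle_le_pi_mul_cos_diff {α β : ℝ} (hα0 : 0 ≤ α) (hαπ : α ≤ π)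
    (hβ1 : π/3 ≤ β) (hβ2 : β ≤ 2*π/3) :
    |α - β| ≤ π * |Real.cos α - Real.cos β| := by
  have hσ1 : π/6 ≤ (α+β)/2 := by linarith
  have hσ2 : (α+β)/2 ≤ 5*π/6 := by linarith
  have hπ := Real.pi_pos
  have hsinσ : 1/2 ≤ Real.sin ((α+β)/2) := by
    rcases le_total ((α+β)/2) (π/2) with h | h
    · have := Real.sin_le_sin_of_le_of_le_pi_div_two (by linarith : -(π/2) ≤ π/6) h hσ1
      rwa [Real.sin_pi_div_six] at this
    · have h2 : Real.sin ((α+β)/2) = Real.sin (π - (α+β)/2) := (Real.sin_pi_sub _).symm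
      rw [h2]
      have := Real.sin_le_sin_of_le_of_le_pi_div_two (by linarith : -(π/2) ≤ π/6)
        (by linarith : π - (α+β)/2 ≤ π/2) (by linarith : π/6 ≤ π - (α+β)/2)
      rwa [Real.sin_pi_div_six] at this
  have hcc : Real.cos α - Real.cos β = -2 * Real.sin ((α+β)/2) * Real.sin ((α-β)/2) :=
    Real.cos_sub_cos α β
  have hd2 : |(α - β)/2| ≤ π/2 := by
    rw [abs_le]; constructor <;> nlinarith
  have hsind : |α - β| / π ≤ |Real.sin ((α-β)/2)| := by
    have h5 : 2/π * |(α-β)/2| ≤ Real.sin |(α-β)/2| :=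
      Real.mul_le_sin (abs_nonneg _) hd2
    have h6 : Real.sin |(α-β)/2| ≤ |Real.sin ((α-β)/2)| := by
      rcases abs_cases ((α-β)/2) with ⟨h,_⟩ | ⟨h,_⟩
      · rw [h]; exact le_abs_self _
      · rw [h, Real.sin_neg]; exact neg_le_abs _
    have h7 : 2/π * |(α-β)/2| = |α - β|/π := by
      rw [abs_div, abs_of_pos (by norm_num : (0:ℝ) < 2)]
      field_simp
    rw [h7] at h5
    exact h5.trans h6
  have habs : |Real.cos α - Real.cos β| = 2 * Real.sin ((α+β)/2) * |Real.sin ((α-β)/2)| := by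
    rw [hcc, abs_mul, abs_mul]
    rw [abs_of_nonneg (by linarith : (0:ℝ) ≤ Real.sin ((α+β)/2))]
    norm_num
  rw [habs]
  have := mul_le_mul_of_nonneg_left hsind (le_of_lt hπ)
  calc |α - β| = π * (|α-β|/π) := by field_simp
  _ ≤ π * |Real.sin ((α-β)/2)| := this
  _ ≤ π * (2 * Real.sin ((α+β)/2) * |Real.sin ((α-β)/2)|) := by
      nlinarith [mul_nonneg (mul_nonneg hπ.le (abs_nonneg (Real.sin ((α-β)/2)))) (by linarith : (0:ℝ) ≤ 2*Real.sin ((α+β)/2) - 1)]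


set_option maxHeartbeats 1000000 in
/-- Comparability of the Euclidean distance to a hyperplane P meeting the ball of
radius 1/2 with the geodesic (great-circle) distance on the unit sphere to P ∩ S₁,
with a constant depending only on the dimension. -/
theorem euclidean_geodesic_distance_comparable (n : ℕ) (hn : 2 ≤ n) :
    ∃ C₂ : ℝ, 1 ≤ C₂ ∧
      ∀ (A : EuclideanSpace ℝ (Fin n)) (c : ℝ), A ≠ 0 →
      (∃ x : EuclideanSpace ℝ (Fin n), (inner ℝ A x : ℝ) = c ∧ ‖x‖ < 1/2) →
      ∀ y : EuclideanSpace ℝ (Fin n), ‖y‖ = 1 →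
        Metric.infDist y {x : EuclideanSpace ℝ (Fin n) | (inner ℝ A x : ℝ) = c} ≤
          sInf {r : ℝ | ∃ z : EuclideanSpace ℝ (Fin n),
            (inner ℝ A z : ℝ) = c ∧ ‖z‖ = 1 ∧ r = Real.arccos (inner ℝ y z)} ∧
        sInf {r : ℝ | ∃ z : EuclideanSpace ℝ (Fin n),
            (inner ℝ A z : ℝ) = c ∧ ‖z‖ = 1 ∧ r = Real.arccos (inner ℝ y z)} ≤
          C₂ * Metric.infDist y {x : EuclideanSpace ℝ (Fin n) | (inner ℝ A x : ℝ) = c} := by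
  refine ⟨π, by linarith [Real.pi_gt_three], ?_⟩
  intro A c hA hex y hy
  obtain ⟨x₀, hx₀c, hx₀n⟩ := hex
  have hπ := Real.pi_pos
  have hAn : ‖A‖ ≠ 0 := norm_ne_zero_iff.2 hA
  have hApos : 0 < ‖A‖ := norm_pos_iff.2 hA
  obtain ⟨a, ha_def⟩ : ∃ a : EuclideanSpace ℝ (Fin n), a = ‖A‖⁻¹ • A := ⟨_, rfl⟩
  have ha : ‖a‖ = 1 := by
    rw [ha_def, norm_smul, norm_inv, norm_norm, inv_mul_cancel₀ hAn]
  have ha0 : a ≠ 0 := by intro h; rw [h, norm_zero] at ha; norm_num at ha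
  have haa : (inner ℝ a a : ℝ) = 1 := by
    rw [real_inner_self_eq_norm_sq, ha]; norm_num
  obtain ⟨c', hc'_def⟩ : ∃ c' : ℝ, c' = ‖A‖⁻¹ * c := ⟨_, rfl⟩
  have hiff : ∀ x : EuclideanSpace ℝ (Fin n),
      (inner ℝ A x : ℝ) = c ↔ (inner ℝ a x : ℝ) = c' := by
    intro x
    rw [ha_def, real_inner_smul_left, hc'_def]
    constructor
    · intro h; rw [h]
    · intro h
      have := mul_left_cancel₀ (inv_ne_zero hAn) h
      exact this
  have hc'lt : |c'| < 1/2 := by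
    have h1 : (inner ℝ a x₀ : ℝ) = c' := (hiff x₀).1 hx₀c
    have h2 := abs_real_inner_le_norm a x₀
    rw [h1, ha, one_mul] at h2
    linarith
  obtain ⟨t, ht_def⟩ : ∃ t : ℝ, t = inner ℝ a y := ⟨_, rfl⟩
  have hya : (inner ℝ y a : ℝ) = t := by rw [real_inner_comm, ← ht_def]
  have ht1 : -1 ≤ t ∧ t ≤ 1 := by
    have h := abs_real_inner_le_norm a y
    rw [← ht_def, ha, hy] at h
    simp only [one_mul] at h
    rw [abs_le] at h
    exact h
  -- a unit vector orthogonal to a with ⟪y, w'⟫ = √(1 - t²)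
  have hexw : ∃ w' : EuclideanSpace ℝ (Fin n), ‖w'‖ = 1 ∧ (inner ℝ a w' : ℝ) = 0 ∧
      (inner ℝ y w' : ℝ) = Real.sqrt (1 - t^2) := by
    obtain ⟨w, hw_def⟩ : ∃ w : EuclideanSpace ℝ (Fin n), w = y - t • a := ⟨_, rfl⟩
    have haw : (inner ℝ a w : ℝ) = 0 := by
      rw [hw_def, inner_sub_right, real_inner_smul_right, haa, ← ht_def]; ring
    have hw2 : ‖w‖^2 = 1 - t^2 := by
      rw [hw_def, norm_sub_sq_real, real_inner_smul_right, norm_smul, hya, hy,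
        Real.norm_eq_abs, ha, mul_pow, sq_abs]
      ring
    by_cases hw : w = 0
    · have ht2 : 1 - t^2 = 0 := by rw [← hw2, hw]; simp
      have hKbot : (ℝ ∙ a)ᗮ ≠ ⊥ := by
        intro hbot
        have htop : (ℝ ∙ a) = ⊤ := Submodule.orthogonal_eq_bot_iff.1 hbot
        have h1 : Module.finrank ℝ (ℝ ∙ a) = 1 := finrank_span_singleton ha0
        have h2 : Module.finrank ℝ (EuclideanSpace ℝ (Fin n)) = n :=
          finrank_euclideanSpace_fin
        rw [htop, finrank_top, h2] at h1
        omega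
      obtain ⟨v, hvK, hv0⟩ := Submodule.exists_mem_ne_zero_of_ne_bot hKbot
      have hav : (inner ℝ a v : ℝ) = 0 :=
        Submodule.mem_orthogonal_singleton_iff_inner_right.mp hvK
      refine ⟨‖v‖⁻¹ • v, ?_, ?_, ?_⟩
      · rw [norm_smul, norm_inv, norm_norm, inv_mul_cancel₀ (norm_ne_zero_iff.2 hv0)]
      · rw [real_inner_smul_right, hav]; ring
      · have hyta : y = t • a := by
          have h3 := hw_def.symm.trans hw
          rw [sub_eq_zero] at h3; exact h3
        rw [hyta, real_inner_smul_right, real_inner_smul_left, hav, ht2, Real.sqrt_zero]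
        ring
    · refine ⟨‖w‖⁻¹ • w, ?_, ?_, ?_⟩
      · rw [norm_smul, norm_inv, norm_norm, inv_mul_cancel₀ (norm_ne_zero_iff.2 hw)]
      · rw [real_inner_smul_right, haw]; ring
      · have hyw : (inner ℝ y w : ℝ) = 1 - t^2 := by
          rw [hw_def, inner_sub_right, real_inner_smul_right, hya,
            real_inner_self_eq_norm_sq, hy]
          ring
        rw [real_inner_smul_right, hyw, ← hw2, Real.sqrt_sq (norm_nonneg w), pow_two,
          ← mul_assoc, inv_mul_cancel₀ (norm_ne_zero_iff.2 hw), one_mul]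
  obtain ⟨w', hw'n, haw', hyw'⟩ := hexw
  have hc'1 : -1 ≤ c' ∧ c' ≤ 1 := by rw [abs_lt] at hc'lt; constructor <;> linarith
  obtain ⟨s, hs_def⟩ : ∃ s : ℝ, s = Real.sqrt (1 - c'^2) := ⟨_, rfl⟩
  have hs2 : s^2 = 1 - c'^2 := by
    rw [hs_def]; exact Real.sq_sqrt (by nlinarith [hc'1.1, hc'1.2])
  obtain ⟨z₀, hz₀_def⟩ : ∃ z₀ : EuclideanSpace ℝ (Fin n), z₀ = c' • a + s • w' := ⟨_, rfl⟩
  have haz₀ : (inner ℝ a z₀ : ℝ) = c' := by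
    rw [hz₀_def, inner_add_right, real_inner_smul_right, real_inner_smul_right, haa, haw']
    ring
  have hz₀n : ‖z₀‖ = 1 := by
    have h1 : ‖z₀‖^2 = 1 := by
      rw [hz₀_def, norm_add_sq_real, real_inner_smul_left, real_inner_smul_right, haw',
        norm_smul, norm_smul, Real.norm_eq_abs, Real.norm_eq_abs, ha, hw'n,
        mul_pow, mul_pow, sq_abs, sq_abs, hs2]
      ring
    nlinarith [norm_nonneg z₀]
  have hyz₀ : (inner ℝ y z₀ : ℝ) = t * c' + Real.sqrt (1 - t^2) * s := by
    rw [hz₀_def, inner_add_right, real_inner_smul_right, real_inner_smul_right, hya, hyw']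
    ring
  -- trigonometric identification
  obtain ⟨α, hα_def⟩ : ∃ α : ℝ, α = Real.arccos t := ⟨_, rfl⟩
  obtain ⟨β, hβ_def⟩ : ∃ β : ℝ, β = Real.arccos c' := ⟨_, rfl⟩
  have hcosα : Real.cos α = t := by rw [hα_def]; exact Real.cos_arccos ht1.1 ht1.2
  have hcosβ : Real.cos β = c' := by rw [hβ_def]; exact Real.cos_arccos hc'1.1 hc'1.2
  have hsinα : Real.sin α = Real.sqrt (1 - t^2) := by rw [hα_def]; exact Real.sin_arccos t
  have hsinβ : Real.sin β = s := by rw [hβ_def, hs_def]; exact Real.sin_arccos c'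
  have hyz₀' : (inner ℝ y z₀ : ℝ) = Real.cos (α - β) := by
    rw [Real.cos_sub, hcosα, hcosβ, hsinα, hsinβ, hyz₀]
  have hα0 : 0 ≤ α := hα_def ▸ Real.arccos_nonneg t
  have hαπ : α ≤ π := hα_def ▸ Real.arccos_le_pi t
  have hβ0 : 0 ≤ β := hβ_def ▸ Real.arccos_nonneg c'
  have hβπ : β ≤ π := hβ_def ▸ Real.arccos_le_pi c'
  have harc : Real.arccos (inner ℝ y z₀ : ℝ) = |α - β| := by
    rw [hyz₀']
    rcases le_total β α with h | h
    · rw [abs_of_nonneg (by linarith), Real.arccos_cos (by linarith) (by linarith)]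
    · rw [abs_of_nonpos (by linarith), ← Real.cos_neg, neg_sub,
        Real.arccos_cos (by linarith) (by linarith)]
  rw [abs_lt] at hc'lt
  have hβ1 : π/3 ≤ β := by
    by_contra h
    push_neg at h
    have := Real.cos_lt_cos_of_nonneg_of_le_pi hβ0 (by linarith : π/3 ≤ π) h
    rw [hcosβ, Real.cos_pi_div_three] at this
    linarith
  have hβ2 : β ≤ 2*π/3 := by
    by_contra h
    push_neg at h
    have := Real.cos_lt_cos_of_nonneg_of_le_pi (by linarith : (0:ℝ) ≤ 2*π/3) hβπ h
    rw [hcosβ] at this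
    have h1 : Real.cos (2*π/3) = -(1/2) := by
      have h2 : (2*π/3 : ℝ) = π - π/3 := by ring
      rw [h2, Real.cos_pi_sub, Real.cos_pi_div_three]
    rw [h1] at this
    linarith
  have hkey : |α - β| ≤ π * |t - c'| := by
    have := angle_le_pi_mul_cos_diff hα0 hαπ hβ1 hβ2
    rwa [hcosα, hcosβ] at this
  have hz₀P : (inner ℝ A z₀ : ℝ) = c := (hiff z₀).2 haz₀
  have hz₀S : Real.arccos (inner ℝ y z₀ : ℝ) ∈ {r : ℝ | ∃ z : EuclideanSpace ℝ (Fin n),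
      (inner ℝ A z : ℝ) = c ∧ ‖z‖ = 1 ∧ r = Real.arccos (inner ℝ y z)} :=
    ⟨z₀, hz₀P, hz₀n, rfl⟩
  have hSne : Set.Nonempty {r : ℝ | ∃ z : EuclideanSpace ℝ (Fin n),
      (inner ℝ A z : ℝ) = c ∧ ‖z‖ = 1 ∧ r = Real.arccos (inner ℝ y z)} := ⟨_, hz₀S⟩
  have hSbdd : BddBelow {r : ℝ | ∃ z : EuclideanSpace ℝ (Fin n),
      (inner ℝ A z : ℝ) = c ∧ ‖z‖ = 1 ∧ r = Real.arccos (inner ℝ y z)} := by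
    refine ⟨0, ?_⟩
    rintro r ⟨z, _, _, rfl⟩
    exact Real.arccos_nonneg _
  have hPne : Set.Nonempty {x : EuclideanSpace ℝ (Fin n) | (inner ℝ A x : ℝ) = c} := ⟨x₀, hx₀c⟩
  have hdle : |t - c'| ≤ Metric.infDist y {x : EuclideanSpace ℝ (Fin n) | (inner ℝ A x : ℝ) = c} := by
    by_contra h
    push_neg at h
    obtain ⟨x, hxP, hxd⟩ := (Metric.infDist_lt_iff hPne).1 h
    have hax : (inner ℝ a x : ℝ) = c' := (hiff x).1 hxP
    have h2 : |t - c'| ≤ ‖y - x‖ := by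
      have h3 := abs_real_inner_le_norm a (y - x)
      rw [inner_sub_right, ← ht_def, hax, ha, one_mul] at h3
      exact h3
    rw [dist_eq_norm] at hxd
    linarith
  constructor
  · refine le_csInf hSne ?_
    rintro r ⟨z, hzP, hzn, rfl⟩
    calc Metric.infDist y {x : EuclideanSpace ℝ (Fin n) | (inner ℝ A x : ℝ) = c}
        ≤ dist y z := Metric.infDist_le_dist_of_mem hzP
    _ = ‖y - z‖ := dist_eq_norm y z
    _ ≤ Real.arccos (inner ℝ y z : ℝ) := chord_le_arc hy hzn
  · calc sInf {r : ℝ | ∃ z : EuclideanSpace ℝ (Fin n),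
        (inner ℝ A z : ℝ) = c ∧ ‖z‖ = 1 ∧ r = Real.arccos (inner ℝ y z)}
        ≤ Real.arccos (inner ℝ y z₀ : ℝ) := csInf_le hSbdd hz₀S
    _ = |α - β| := harc
    _ ≤ π * |t - c'| := hkey
    _ ≤ π * Metric.infDist y {x : EuclideanSpace ℝ (Fin n) | (inner ℝ A x : ℝ) = c} := by
        nlinarith [abs_nonneg (t - c')]
end

section
/- A continuous function u : ℝⁿ → ℝ is convex if and only if it is a viscosity subsolution of −λ₁[u] = 0; that is, if and only if for every twice continuously differentiable function φ : ℝⁿ → ℝ and every point x₀ at which u − φ attains a local maximum, the Hessian matrix D²φ(x₀) is positive semidefinite (equivalently, ⟨D²φ(x₀) v, v⟩ ≥ 0 for every v ∈ ℝⁿ, i.e., the smallest eigenvalue λ₁ of D²φ(x₀) is nonnegative). -/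
set_option maxHeartbeats 1000000

open Filter Topology RealInnerProductSpace

section Aux

variable {E : Type*} [NormedAddCommGroup E] [InnerProductSpace ℝ E]

lemma line_deriv2 (φ : E → ℝ) (hφ : ContDiff ℝ 2 φ) (x v : E) (s : ℝ) :
    deriv (deriv (fun t : ℝ => φ (x + t • v))) s
      = fderiv ℝ (fderiv ℝ φ) (x + s • v) v v := by
  have hL : ∀ t : ℝ, HasDerivAt (fun t : ℝ => x + t • v) v t := by
    intro t
    simpa using ((hasDerivAt_id t).smul_const v).const_add x
  have hd1 : ∀ t : ℝ, deriv (fun t : ℝ => φ (x + t • v)) t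
      = (fderiv ℝ φ (x + t • v)) v := by
    intro t
    have h1 : HasFDerivAt φ (fderiv ℝ φ (x + t • v)) (x + t • v) :=
      (hφ.differentiable (by norm_num)).differentiableAt.hasFDerivAt
    exact (h1.comp_hasDerivAt t (hL t)).deriv
  have hfd : ContDiff ℝ 1 (fderiv ℝ φ) := hφ.fderiv_right (le_refl _)
  have h2 : HasDerivAt (fun t : ℝ => (fderiv ℝ φ (x + t • v)) v)
      (fderiv ℝ (fderiv ℝ φ) (x + s • v) v v) s := by
    have h3 : HasFDerivAt (fderiv ℝ φ) (fderiv ℝ (fderiv ℝ φ) (x + s • v)) (x + s • v) :=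
      (hfd.differentiable (by norm_num)).differentiableAt.hasFDerivAt
    have h4 : HasDerivAt (fun t : ℝ => fderiv ℝ φ (x + t • v))
        (fderiv ℝ (fderiv ℝ φ) (x + s • v) v) s := h3.comp_hasDerivAt s (hL s)
    exact h4.clm_apply (hasDerivAt_const _ _) |>.congr_deriv (by simp)
  rw [funext hd1] at *
  exact h2.deriv


lemma quad_d2 (A B c : ℝ) : deriv (deriv (fun t : ℝ => A + B*t + c*t^2)) 0 = 2*c := by
  have h1 : ∀ t : ℝ, HasDerivAt (fun t : ℝ => A + B*t + c*t^2) (B + 2*c*t) t := by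
    intro t
    have h := ((hasDerivAt_const t A).add ((hasDerivAt_id t).const_mul B)).add
      ((hasDerivAt_pow 2 t).const_mul c)
    have he : (0 + B * 1) + c * (↑(2:ℕ) * t ^ (2 - 1)) = B + 2*c*t := by
      norm_num; ring
    rw [he] at h
    exact h
  have h2 : deriv (fun t : ℝ => A + B*t + c*t^2) = fun t => B + 2*c*t :=
    funext fun t => (h1 t).deriv
  rw [h2]
  have h3 : HasDerivAt (fun t : ℝ => B + 2*c*t) (2*c) 0 := by
    simpa using ((hasDerivAt_id (0:ℝ)).const_mul (2*c)).const_add B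
  simpa using h3.deriv

lemma fwd (φ : E → ℝ) (hφ : ContDiff ℝ 2 φ) {u : E → ℝ}
    (hconv : ConvexOn ℝ Set.univ u) (x₀ : E)
    (hmax : IsLocalMax (fun x => u x - φ x) x₀) (v : E) :
    0 ≤ iteratedFDeriv ℝ 2 φ x₀ ![v, v] := by
  by_contra hK
  push_neg at hK
  rw [iteratedFDeriv_two_apply] at hK
  simp only [Matrix.cons_val_zero, Matrix.cons_val_one, Matrix.head_cons] at hK
  -- ψ continuous and negative at x₀
  set ψ : E → ℝ := fun z => fderiv ℝ (fderiv ℝ φ) z v v with hψdef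
  have hψcont : Continuous ψ := by
    have h1 : Continuous (fderiv ℝ (fderiv ℝ φ)) :=
      (hφ.fderiv_right (m := 1) (le_refl _)).continuous_fderiv one_ne_zero
    exact ((h1.clm_apply continuous_const).clm_apply continuous_const)
  have hψneg : ∀ᶠ z in 𝓝 x₀, ψ z < 0 :=
    hψcont.continuousAt.eventually_lt continuousAt_const hK
  obtain ⟨η, hη, hηball⟩ := Metric.eventually_nhds_iff_ball.mp hψneg
  -- local max ball
  obtain ⟨ε, hε, hεball⟩ := Metric.eventually_nhds_iff_ball.mp hmax
  set g : ℝ → ℝ := fun t => φ (x₀ + t • v) with hgdef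
  -- g strictly concave on a small interval
  have hgc : Continuous g := hφ.continuous.comp (by continuity)
  set δ : ℝ := η / (1 + ‖v‖) with hδdef
  have hδpos : 0 < δ := div_pos hη (by positivity)
  have hmem : ∀ t : ℝ, |t| ≤ δ → x₀ + t • v ∈ Metric.ball x₀ η := by
    intro t ht
    simp only [Metric.mem_ball, dist_eq_norm]
    have : ‖x₀ + t • v - x₀‖ = |t| * ‖v‖ := by
      simp [norm_smul, abs_mul]
    rw [this]
    calc |t| * ‖v‖ ≤ δ * ‖v‖ := by
          exact mul_le_mul_of_nonneg_right ht (norm_nonneg v)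
      _ < η := by
          rw [hδdef, div_mul_eq_mul_div, div_lt_iff₀ (by positivity)]
          nlinarith [norm_nonneg v]
  have hconc : StrictConcaveOn ℝ (Set.Icc (-δ) δ) g := by
    apply strictConcaveOn_of_deriv2_neg (convex_Icc _ _) hgc.continuousOn
    intro t ht
    rw [interior_Icc] at ht
    have : deriv^[2] g t = deriv (deriv g) t := by
      simp [Function.iterate_succ, Function.iterate_one]
    rw [this, line_deriv2 φ hφ x₀ v t]
    exact hηball _ (hmem t (le_of_lt (abs_lt.mpr ⟨ht.1, ht.2⟩)))
  -- pick t
  set t : ℝ := min δ (ε / (1 + ‖v‖)) with htdef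
  have htpos : 0 < t := lt_min hδpos (div_pos hε (by positivity))
  have ht1 : x₀ + t • v ∈ Metric.ball x₀ ε := by
    simp only [Metric.mem_ball, dist_eq_norm]
    have : ‖x₀ + t • v - x₀‖ = |t| * ‖v‖ := by simp [norm_smul, abs_mul]
    rw [this, abs_of_pos htpos]
    calc t * ‖v‖ ≤ ε / (1 + ‖v‖) * ‖v‖ :=
          mul_le_mul_of_nonneg_right (min_le_right _ _) (norm_nonneg v)
      _ < ε := by
          rw [div_mul_eq_mul_div, div_lt_iff₀ (by positivity)]
          nlinarith [norm_nonneg v]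
  have ht2 : x₀ + (-t) • v ∈ Metric.ball x₀ ε := by
    simp only [Metric.mem_ball, dist_eq_norm]
    have : ‖x₀ + (-t) • v - x₀‖ = |t| * ‖v‖ := by
      simp [norm_smul, abs_mul]
    rw [this, abs_of_pos htpos]
    calc t * ‖v‖ ≤ ε / (1 + ‖v‖) * ‖v‖ :=
          mul_le_mul_of_nonneg_right (min_le_right _ _) (norm_nonneg v)
      _ < ε := by
          rw [div_mul_eq_mul_div, div_lt_iff₀ (by positivity)]
          nlinarith [norm_nonneg v]
  -- strict concavity at ±t
  have hmemIcc1 : t ∈ Set.Icc (-δ) δ :=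
    ⟨by linarith [min_le_left δ (ε / (1 + ‖v‖))], min_le_left _ _⟩
  have hmemIcc2 : -t ∈ Set.Icc (-δ) δ :=
    ⟨by simp; exact min_le_left _ _, by linarith [min_le_left δ (ε / (1 + ‖v‖))]⟩
  have hne : t ≠ -t := by intro h; linarith
  have hsc := hconc.2 hmemIcc1 hmemIcc2 hne (show (0:ℝ) < 1/2 by norm_num)
    (show (0:ℝ) < 1/2 by norm_num) (by norm_num)
  have hmid : (1/2 : ℝ) • t + (1/2 : ℝ) • (-t) = 0 := by simp only [smul_eq_mul]; ring
  rw [hmid] at hsc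
  -- g 0 = φ x₀
  have hg0 : g 0 = φ x₀ := by simp [hgdef]
  -- convexity of u
  have hcu := hconv.2 (Set.mem_univ (x₀ + t • v)) (Set.mem_univ (x₀ + (-t) • v))
    (show (0:ℝ) ≤ 1/2 by norm_num) (show (0:ℝ) ≤ 1/2 by norm_num) (by norm_num)
  have hmid2 : (1/2 : ℝ) • (x₀ + t • v) + (1/2 : ℝ) • (x₀ + (-t) • v) = x₀ := by
    module
  rw [hmid2] at hcu
  have hm1 := hεball _ ht1
  have hm2 := hεball _ ht2
  simp only [smul_eq_mul, hg0] at hsc hm1 hm2 hcu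
  have : g t = φ (x₀ + t • v) := rfl
  linarith [hsc, hm1, hm2, hcu]

variable [FiniteDimensional ℝ E]

lemma bwd {u : E → ℝ} (hu : Continuous u)
    (hyp : ∀ φ : E → ℝ, ContDiff ℝ 2 φ →
      ∀ x₀ : E, IsLocalMax (fun x => u x - φ x) x₀ →
      ∀ v : E, 0 ≤ iteratedFDeriv ℝ 2 φ x₀ ![v, v]) :
    ConvexOn ℝ Set.univ u := by
  refine ⟨convex_univ, fun x _ y _ a b ha hb hab => ?_⟩
  by_contra hlt
  push_neg at hlt
  simp only [smul_eq_mul] at hlt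
  -- degenerate cases
  rcases eq_or_lt_of_le ha with ha0 | ha
  · rw [← ha0] at hab hlt; simp at hab; rw [hab] at hlt; simp at hlt
  rcases eq_or_lt_of_le hb with hb0 | hb
  · rw [← hb0] at hab hlt; simp at hab; rw [hab] at hlt; simp at hlt
  have hxy : x ≠ y := by
    rintro rfl
    rw [show a • x + b • x = x from by rw [← add_smul, hab, one_smul]] at hlt
    have : a * u x + b * u x = u x := by rw [← add_mul, hab, one_mul]
    linarith
  set e : E := y - x with hedef
  have he : e ≠ 0 := sub_ne_zero.mpr (Ne.symm hxy)
  have hne : 0 < ‖e‖ := norm_pos_iff.mpr he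
  set κ : ℝ := (u y - u x) / ‖e‖^2 with hκdef
  set ℓ : E → ℝ := fun z => u x + κ * ⟪z - x, e⟫ with hℓdef
  set w : E → ℝ := fun z => u z - ℓ z with hwdef
  have hwc : Continuous w := by
    apply hu.sub
    exact continuous_const.add (continuous_const.mul
      ((continuous_id.sub continuous_const).inner continuous_const))
  have hℓseg : ∀ t : ℝ, ℓ (x + t • e) = u x + t * (u y - u x) := by
    intro t
    simp only [hℓdef, hκdef, add_sub_cancel_left, real_inner_smul_left,
      real_inner_self_eq_norm_sq]
    field_simp
  set h : ℝ → ℝ := fun t => w (x + t • e) with hhdef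
  have hhc : Continuous h := hwc.comp (by continuity)
  have hh0 : h 0 = 0 := by
    show u (x + (0:ℝ) • e) - ℓ (x + (0:ℝ) • e) = 0
    rw [hℓseg 0]; simp
  have hh1 : h 1 = 0 := by
    show u (x + (1:ℝ) • e) - ℓ (x + (1:ℝ) • e) = 0
    rw [hℓseg 1, show x + (1:ℝ) • e = y by simp [hedef]]
    ring
  have hhb : 0 < h b := by
    have haa : a = 1 - b := by linarith
    subst haa
    show 0 < u (x + b • e) - ℓ (x + b • e)
    rw [hℓseg b, show x + b • e = (1-b) • x + b • y from by rw [hedef]; module]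
    linarith
  -- max of h on [0,1]
  obtain ⟨t₁, ht₁mem, ht₁max⟩ := isCompact_Icc.exists_isMaxOn
    (Set.nonempty_Icc.mpr zero_le_one) hhc.continuousOn
  set M : ℝ := h t₁ with hMdef
  have hM : 0 < M := lt_of_lt_of_le hhb (ht₁max ⟨le_of_lt hb, by linarith⟩)
  have ht₁0 : 0 < t₁ := by
    rcases lt_or_eq_of_le ht₁mem.1 with h' | h'
    · exact h'
    · exfalso; rw [← h'] at hMdef; rw [hMdef] at hM; rw [hh0] at hM; exact lt_irrefl 0 hM
  have ht₁1 : t₁ < 1 := by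
    rcases lt_or_eq_of_le ht₁mem.2 with h' | h'
    · exact h'
    · exfalso; rw [h'] at hMdef; rw [hMdef] at hM; rw [hh1] at hM; exact lt_irrefl 0 hM
  -- geometric setup
  set c : E := x + t₁ • e with hcdef
  set ev : E := ‖e‖⁻¹ • e with hevdef
  have hev1 : ‖ev‖ = 1 := by
    rw [hevdef, norm_smul]
    simp [norm_ne_zero_iff.mpr he, abs_of_pos (inv_pos.mpr hne)]
  have hevev : ⟪ev, ev⟫ = 1 := by
    rw [real_inner_self_eq_norm_sq, hev1]; norm_num
  set sf : E → ℝ := fun z => ⟪z - c, ev⟫ with hsfdef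
  have hsfc : Continuous sf :=
    (continuous_id.sub continuous_const).inner continuous_const
  set qf : E → ℝ := fun z => ‖z - c‖^2 - (sf z)^2 with hqfdef
  have hqfc : Continuous qf :=
    ((continuous_id.sub continuous_const).norm.pow 2).sub (hsfc.pow 2)
  have hqf0 : ∀ z, 0 ≤ qf z := by
    intro z
    have h1 : |⟪z - c, ev⟫| ≤ ‖z - c‖ * ‖ev‖ := abs_real_inner_le_norm _ _
    rw [hev1, mul_one] at h1
    have h2 : (sf z)^2 ≤ ‖z - c‖^2 := by
      rw [← sq_abs (sf z)]
      exact pow_le_pow_left₀ (abs_nonneg _) h1 2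
    simp only [hqfdef]; linarith
  set a' : ℝ := t₁ * ‖e‖ with ha'def
  set b' : ℝ := (1 - t₁) * ‖e‖ with hb'def
  have ha' : 0 < a' := mul_pos ht₁0 hne
  have hb' : 0 < b' := mul_pos (by linarith) hne
  have hsc : sf c = 0 := by simp [hsfdef]
  have hqc : qf c = 0 := by simp [hqfdef, hsc]
  have hwcM : w c = M := rfl
  -- relation between cap points and x, y
  have hcap_y : c + b' • ev = y := by
    rw [hcdef, hevdef, hb'def, smul_smul]
    rw [mul_assoc, mul_inv_cancel₀ (ne_of_gt hne), mul_one]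
    rw [hedef]; module
  have hcap_x : c + (-a') • ev = x := by
    rw [hcdef, hevdef, ha'def, smul_smul]
    rw [show -(t₁ * ‖e‖) * ‖e‖⁻¹ = -t₁ * (‖e‖ * ‖e‖⁻¹) by ring,
      mul_inv_cancel₀ (ne_of_gt hne), mul_one]
    module
  -- choose r so that w < M/2 near x and y
  have hwx : ∀ᶠ z in 𝓝 x, w z < M / 2 := by
    have : w x = 0 := by simp [hwdef, hℓdef]
    exact hwc.continuousAt.eventually_lt continuousAt_const (by rw [this]; exact half_pos hM)
  have hwy : ∀ᶠ z in 𝓝 y, w z < M / 2 := by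
    have hwy0 : w y = 0 := by
      have : y = x + (1:ℝ) • e := by simp [hedef]
      rw [this]
      show h 1 = 0
      exact hh1
    exact hwc.continuousAt.eventually_lt continuousAt_const (by rw [hwy0]; exact half_pos hM)
  obtain ⟨r₁, hr₁, hball₁⟩ := Metric.eventually_nhds_iff_ball.mp hwx
  obtain ⟨r₂, hr₂, hball₂⟩ := Metric.eventually_nhds_iff_ball.mp hwy
  set r : ℝ := min r₁ r₂ / 2 with hrdef
  have hr : 0 < r := by
    apply div_pos (lt_min hr₁ hr₂) two_pos
  have hrx : ∀ z : E, ‖z - x‖ ≤ r → w z < M / 2 := by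
    intro z hz
    apply hball₁
    rw [Metric.mem_ball, dist_eq_norm]
    calc ‖z - x‖ ≤ r := hz
      _ < r₁ := by rw [hrdef]; have := min_le_left r₁ r₂; linarith [lt_min hr₁ hr₂]
  have hry : ∀ z : E, ‖z - y‖ ≤ r → w z < M / 2 := by
    intro z hz
    apply hball₂
    rw [Metric.mem_ball, dist_eq_norm]
    calc ‖z - y‖ ≤ r := hz
      _ < r₂ := by rw [hrdef]; have := min_le_right r₁ r₂; linarith [lt_min hr₁ hr₂]
  -- the compact set K
  set K : Set E := {z | -a' ≤ sf z ∧ sf z ≤ b' ∧ qf z ≤ r^2} with hKdef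
  have hKclosed : IsClosed K := by
    have h1 : IsClosed {z : E | -a' ≤ sf z} := isClosed_le continuous_const hsfc
    have h2 : IsClosed {z : E | sf z ≤ b'} := isClosed_le hsfc continuous_const
    have h3 : IsClosed {z : E | qf z ≤ r^2} := isClosed_le hqfc continuous_const
    have : K = {z : E | -a' ≤ sf z} ∩ ({z : E | sf z ≤ b'} ∩ {z : E | qf z ≤ r^2}) := by
      ext z; simp [hKdef, Set.mem_inter_iff, and_assoc]
    rw [this]
    exact h1.inter (h2.inter h3)
  have hKbdd : Bornology.IsBounded K := by
    apply Bornology.IsBounded.subset (Metric.isBounded_closedBall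
      (x := c) (r := r + a' + b'))
    intro z hz
    obtain ⟨h1, h2, h3⟩ := hz
    rw [Metric.mem_closedBall, dist_eq_norm]
    have habs : |sf z| ≤ a' + b' := by
      rw [abs_le]; constructor <;> [linarith; linarith]
    have hnorm2 : ‖z - c‖^2 ≤ (r + a' + b')^2 := by
      have hs2 : (sf z)^2 ≤ (a' + b')^2 := by
        rw [← sq_abs (sf z)]
        apply pow_le_pow_left₀ (abs_nonneg _) habs
      have hqz : ‖z - c‖^2 = qf z + (sf z)^2 := by simp only [hqfdef]; ring
      have hexp : (r + a' + b')^2 = r^2 + (a'+b')^2 + 2*r*(a'+b') := by ring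
      have h2r : 0 ≤ 2*r*(a'+b') := by positivity
      linarith
    calc ‖z - c‖ = Real.sqrt (‖z - c‖^2) := by
          rw [Real.sqrt_sq (norm_nonneg _)]
      _ ≤ Real.sqrt ((r + a' + b')^2) := Real.sqrt_le_sqrt hnorm2
      _ = r + a' + b' := Real.sqrt_sq (by positivity)
  have hKcompact : IsCompact K := Metric.isCompact_of_isClosed_isBounded hKclosed hKbdd
  have hcK : c ∈ K := by
    simp only [hKdef, Set.mem_setOf_eq, hsc, hqc]
    refine ⟨by linarith, by linarith, by positivity⟩
  -- bound of w on K
  obtain ⟨zW, _, hzWmax⟩ := hKcompact.exists_isMaxOn ⟨c, hcK⟩ hwc.continuousOn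
  set W : ℝ := w zW with hWdef
  have hwK : ∀ z ∈ K, w z ≤ W := fun z hz => hzWmax hz
  -- constants
  set C : ℝ := (|W| + 1) / r^2 with hCdef
  have hC : 0 < C := by positivity
  set α : ℝ := M / (2 * a' * b') with hαdef
  have hα : 0 < α := by positivity
  set Q : ℝ → ℝ := fun t => α * (t + a') * (b' - t) with hQdef
  have hQ0 : Q 0 = M / 2 := by
    simp only [hQdef, hαdef, zero_add, sub_zero]
    field_simp
  have hQnn : ∀ t : ℝ, -a' ≤ t → t ≤ b' → 0 ≤ Q t := by
    intro t h1 h2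
    apply mul_nonneg (mul_nonneg hα.le (by linarith)) (by linarith)
  have hQa : Q (-a') = 0 := by simp [hQdef]
  have hQb : Q b' = 0 := by simp [hQdef]
  -- the test function and F = u - φ
  set φ : E → ℝ := fun z => ℓ z + Q (sf z) + C * qf z with hφdef
  set F : E → ℝ := fun z => u z - φ z with hFdef
  have hFw : ∀ z, F z = w z - Q (sf z) - C * qf z := by
    intro z; simp only [hFdef, hφdef, hwdef]; ring
  have hFc : F c = M / 2 := by
    rw [hFw c, hsc, hqc, hQ0, hwcM]; ring
  have hFcont : Continuous F := by
    have h1 : Continuous fun z => w z - α * (sf z + a') * (b' - sf z) - C * qf z :=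
      (hwc.sub ((continuous_const.mul (hsfc.add continuous_const)).mul
        (continuous_const.sub hsfc))).sub (continuous_const.mul hqfc)
    exact h1.congr fun z => by rw [hFw z]
  -- maximize F over K
  obtain ⟨z₀, hz₀K, hz₀max⟩ := hKcompact.exists_isMaxOn ⟨c, hcK⟩ hFcont.continuousOn
  have hFz₀ : M / 2 ≤ F z₀ := hFc ▸ hz₀max hcK
  obtain ⟨hz₀1, hz₀2, hz₀3⟩ := hz₀K
  -- strict interiority
  have hCr : C * r^2 = |W| + 1 := by
    rw [hCdef]; field_simp
  have hq_lt : qf z₀ < r^2 := by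
    by_contra hcon
    push_neg at hcon
    have h1 : |W| + 1 ≤ C * qf z₀ := by
      rw [← hCr]
      exact mul_le_mul_of_nonneg_left hcon hC.le
    have h2 : 0 ≤ Q (sf z₀) := hQnn _ hz₀1 hz₀2
    have h3 : w z₀ ≤ W := hwK _ ⟨hz₀1, hz₀2, hz₀3⟩
    have h4 := hFw z₀
    have h5 : W ≤ |W| := le_abs_self W
    clear_value M W C F Q sf qf w
    linarith only [hFz₀, hM, h1, h2, h3, h4, h5]
  have hcapbound : ∀ p : E, p = c + (sf z₀) • ev → sf z₀ = sf z₀ → True := fun _ _ _ => trivial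
  have hs_lt_b : sf z₀ < b' := by
    rcases lt_or_eq_of_le hz₀2 with h' | h'
    · exact h'
    exfalso
    have hzy : ‖z₀ - y‖^2 = qf z₀ := by
      have hd : z₀ - y = (z₀ - c) - b' • ev := by rw [← hcap_y]; abel
      rw [hd, norm_sub_sq_real, real_inner_smul_right, norm_smul, hev1, mul_one,
        Real.norm_eq_abs, abs_of_pos hb',
        show ⟪z₀ - c, ev⟫ = sf z₀ from rfl, ← h']
      simp only [hqfdef]
      ring
    have hzyr : ‖z₀ - y‖ ≤ r := by
      have h1 : ‖z₀ - y‖^2 ≤ r^2 := by rw [hzy]; exact hz₀3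
      calc ‖z₀ - y‖ = Real.sqrt (‖z₀ - y‖^2) := (Real.sqrt_sq (norm_nonneg _)).symm
        _ ≤ Real.sqrt (r^2) := Real.sqrt_le_sqrt h1
        _ = r := Real.sqrt_sq hr.le
    have h2 : w z₀ < M / 2 := hry _ hzyr
    have h3 := hFw z₀
    have h4 : Q (sf z₀) = 0 := by rw [h']; exact hQb
    have h5 : 0 ≤ C * qf z₀ := mul_nonneg hC.le (hqf0 _)
    clear_value M W C F Q sf qf w
    linarith only [hFz₀, hM, h2, h3, h4, h5]
  have hs_gt_a : -a' < sf z₀ := by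
    rcases lt_or_eq_of_le hz₀1 with h' | h'
    · exact h'
    exfalso
    have hzx : ‖z₀ - x‖^2 = qf z₀ := by
      have hd : z₀ - x = (z₀ - c) + a' • ev := by
        rw [← hcap_x]; module
      rw [hd, norm_add_sq_real, real_inner_smul_right, norm_smul, hev1, mul_one,
        Real.norm_eq_abs, abs_of_pos ha',
        show ⟪z₀ - c, ev⟫ = sf z₀ from rfl]
      simp only [hqfdef]
      rw [← h']
      ring
    have hzxr : ‖z₀ - x‖ ≤ r := by
      have h1 : ‖z₀ - x‖^2 ≤ r^2 := by rw [hzx]; exact hz₀3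
      calc ‖z₀ - x‖ = Real.sqrt (‖z₀ - x‖^2) := (Real.sqrt_sq (norm_nonneg _)).symm
        _ ≤ Real.sqrt (r^2) := Real.sqrt_le_sqrt h1
        _ = r := Real.sqrt_sq hr.le
    have h2 : w z₀ < M / 2 := hrx _ hzxr
    have h3 := hFw z₀
    have h4 : Q (sf z₀) = 0 := by rw [← h']; exact hQa
    have h5 : 0 ≤ C * qf z₀ := mul_nonneg hC.le (hqf0 _)
    clear_value M W C F Q sf qf w
    linarith only [hFz₀, hM, h2, h3, h4, h5]
  -- local max
  have hUopen : IsOpen {z : E | -a' < sf z ∧ sf z < b' ∧ qf z < r^2} := by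
    have h1 : IsOpen {z : E | -a' < sf z} := isOpen_lt continuous_const hsfc
    have h2 : IsOpen {z : E | sf z < b'} := isOpen_lt hsfc continuous_const
    have h3 : IsOpen {z : E | qf z < r^2} := isOpen_lt hqfc continuous_const
    have : {z : E | -a' < sf z ∧ sf z < b' ∧ qf z < r^2}
        = {z : E | -a' < sf z} ∩ ({z : E | sf z < b'} ∩ {z : E | qf z < r^2}) := by
      ext z; simp [Set.mem_inter_iff, and_assoc]
    rw [this]
    exact h1.inter (h2.inter h3)
  have hloc : IsLocalMax F z₀ := by
    apply Filter.eventually_of_mem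
      (hUopen.mem_nhds ⟨hs_gt_a, hs_lt_b, hq_lt⟩)
    intro z hz
    exact hz₀max ⟨hz.1.le, hz.2.1.le, hz.2.2.le⟩
  -- φ is C²
  have hφ2 : ContDiff ℝ 2 φ := by
    have hsub : ∀ p : E, ContDiff ℝ 2 (fun z : E => z - p) := fun p =>
      contDiff_id.sub contDiff_const
    have hi : ∀ (p p' : E), ContDiff ℝ 2 (fun z : E => ⟪z - p, p'⟫) := fun p p' =>
      (hsub p).inner ℝ contDiff_const
    have hn : ContDiff ℝ 2 (fun z : E => ‖z - c‖^2) := (hsub c).norm_sq ℝ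
    simp only [hφdef, hℓdef, hQdef, hsfdef, hqfdef]
    exact ((contDiff_const.add (contDiff_const.mul (hi x e))).add
        ((contDiff_const.mul ((hi c ev).add contDiff_const)).mul
          (contDiff_const.sub (hi c ev)))).add
      (contDiff_const.mul (hn.sub ((hi c ev).pow 2)))
  -- apply the viscosity hypothesis
  have h0 := hyp φ hφ2 z₀ hloc ev
  rw [iteratedFDeriv_two_apply] at h0
  simp only [Matrix.cons_val_zero, Matrix.cons_val_one, Matrix.head_cons] at h0
  -- compute the second derivative along the line
  set s₀ : ℝ := sf z₀ with hs₀def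
  set A : ℝ := u x + κ * ⟪z₀ - x, e⟫ + α * (s₀ + a') * (b' - s₀) + C * qf z₀ with hAdef
  set B : ℝ := κ * ⟪ev, e⟫ + α * (b' - s₀) - α * (s₀ + a') with hBdef
  have hline : (fun t : ℝ => φ (z₀ + t • ev)) = fun t => A + B*t + (-α)*t^2 := by
    funext t
    have hd1 : z₀ + t • ev - x = (z₀ - x) + t • ev := by abel
    have hd2 : z₀ + t • ev - c = (z₀ - c) + t • ev := by abel
    have h1 : ⟪z₀ + t • ev - x, e⟫ = ⟪z₀ - x, e⟫ + t * ⟪ev, e⟫ := by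
      rw [hd1, inner_add_left, real_inner_smul_left]
    have h2 : sf (z₀ + t • ev) = s₀ + t := by
      show ⟪z₀ + t • ev - c, ev⟫ = s₀ + t
      rw [hd2, inner_add_left, real_inner_smul_left, hevev, mul_one]
    have h3 : ‖z₀ + t • ev - c‖^2 = ‖z₀ - c‖^2 + 2*(t * s₀) + t^2 := by
      rw [hd2, norm_add_sq_real, real_inner_smul_right, norm_smul, hev1, mul_one,
        Real.norm_eq_abs, sq_abs, show ⟪z₀ - c, ev⟫ = s₀ from rfl]
    show ℓ (z₀ + t • ev) + Q (sf (z₀ + t • ev)) + C * qf (z₀ + t • ev) = A + B*t + (-α)*t^2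
    have hℓ1 : ℓ (z₀ + t • ev) = u x + κ * (⟪z₀ - x, e⟫ + t * ⟪ev, e⟫) := by
      simp only [hℓdef]; rw [h1]
    have hq1 : qf (z₀ + t • ev) = qf z₀ + (‖z₀ - c‖^2 + 2*(t * s₀) + t^2 - ‖z₀ - c‖^2 - ((s₀ + t)^2 - s₀^2)) := by
      simp only [hqfdef]
      rw [h3, h2]
      have : (sf z₀)^2 = s₀^2 := rfl
      rw [this]
      ring
    rw [hℓ1, hq1, h2]
    simp only [hQdef, hAdef, hBdef]
    ring
  have hval : fderiv ℝ (fderiv ℝ φ) z₀ ev ev = 2 * (-α) := by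
    have hthis := line_deriv2 φ hφ2 z₀ ev 0
    rw [zero_smul, add_zero] at hthis
    rw [hline, quad_d2] at hthis
    exact hthis.symm
  rw [hval] at h0
  linarith

end Aux

/-- A continuous function is convex if and only if it is a viscosity subsolution of
`-λ₁[u] = 0`: at every local maximum of `u - φ` for a C² test function `φ`, the
Hessian of `φ` is positive semidefinite. -/
theorem convex_iff_viscosity_subsolution (n : ℕ)
    (u : EuclideanSpace ℝ (Fin n) → ℝ) (hu : Continuous u) :
    ConvexOn ℝ Set.univ u ↔
      ∀ φ : EuclideanSpace ℝ (Fin n) → ℝ, ContDiff ℝ 2 φ →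
      ∀ x₀ : EuclideanSpace ℝ (Fin n), IsLocalMax (fun x => u x - φ x) x₀ →
      ∀ v : EuclideanSpace ℝ (Fin n), 0 ≤ iteratedFDeriv ℝ 2 φ x₀ ![v, v] := by
  constructor
  · intro hconv φ hφ x₀ hmax v
    exact fwd φ hφ hconv x₀ hmax v
  · exact bwd hu
end

section
/- Let 0 < ε < 1, let D be the closed unit disk in ℝ², and let u(x, y) = −(1 + x)^{1−ε}. Then u is convex and continuous on D, and u equals the convex envelope of its own boundary values: for every (x, y) ∈ D, u(x, y) = sup{L(x, y) : L : ℝ² → ℝ affine, L ≤ u on the unit circle S₁}. -/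
open Real Set

/-- Tangent line inequality for the concave function `x ↦ (1+x)^γ`, `0 < γ ≤ 1`. -/
private lemma tangent_ineq {γ : ℝ} (hγ0 : 0 < γ) (hγ1 : γ ≤ 1) {t x : ℝ}
    (ht : -1 < t) (hx : -1 ≤ x) :
    (1 + x) ^ γ ≤ (1 + t) ^ γ + γ * ((1 + t) ^ (γ - 1)) * (x - t) := by
  set A := 1 + t with hA
  set B := 1 + x with hB
  have hApos : 0 < A := by simp [hA]; linarith
  have hBnn : 0 ≤ B := by simp [hB]; linarith
  have hdiv : 0 ≤ B / A := div_nonneg hBnn hApos.le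
  have hs : -1 ≤ B / A - 1 := by linarith
  have h := rpow_one_add_le_one_add_mul_self hs hγ0.le hγ1
  have h1A : (1 : ℝ) + (B / A - 1) = B / A := by ring
  rw [h1A, Real.div_rpow hBnn hApos.le] at h
  have hAγ : 0 < A ^ γ := Real.rpow_pos_of_pos hApos γ
  rw [div_le_iff₀ hAγ] at h
  have hsub : A ^ (γ - 1) = A ^ γ / A := by
    rw [Real.rpow_sub hApos, Real.rpow_one]
  have hxt : x - t = B - A := by rw [hA, hB]; ring
  rw [hsub, hxt]
  calc B ^ γ ≤ (1 + γ * (B / A - 1)) * A ^ γ := h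
    _ = A ^ γ + γ * (A ^ γ / A) * (B - A) := by field_simp

private lemma coords_sq (p : EuclideanSpace ℝ (Fin 2)) :
    p 0 ^ 2 + p 1 ^ 2 = ‖p‖ ^ 2 := by
  rw [EuclideanSpace.norm_eq, Real.sq_sqrt (by positivity)]
  simp [Fin.sum_univ_two, sq_abs]

/-- For 0 < ε < 1, the function u(x,y) = -(1+x)^{1-ε} on the closed unit disk is
convex and continuous, and coincides with the convex envelope of its own boundary
values on the unit circle. -/
theorem optimal_regularity_example_is_convex_envelope (ε : ℝ) (hε : 0 < ε) (hε1 : ε < 1) :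
    ConvexOn ℝ (Metric.closedBall (0 : EuclideanSpace ℝ (Fin 2)) 1)
      (fun p : EuclideanSpace ℝ (Fin 2) => -(1 + p 0) ^ (1 - ε)) ∧
    ContinuousOn (fun p : EuclideanSpace ℝ (Fin 2) => -(1 + p 0) ^ (1 - ε))
      (Metric.closedBall (0 : EuclideanSpace ℝ (Fin 2)) 1) ∧
    ∀ p ∈ Metric.closedBall (0 : EuclideanSpace ℝ (Fin 2)) 1,
      -(1 + p 0) ^ (1 - ε) =
        sSup {r : ℝ | ∃ a b c : ℝ,
          (∀ q ∈ Metric.sphere (0 : EuclideanSpace ℝ (Fin 2)) 1,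
            a * q 0 + b * q 1 + c ≤ -(1 + q 0) ^ (1 - ε)) ∧
          r = a * p 0 + b * p 1 + c} := by
  set γ := 1 - ε with hγdef
  have hγ0 : 0 < γ := by rw [hγdef]; linarith
  have hγ1 : γ ≤ 1 := by rw [hγdef]; linarith
  -- coordinate bounds on the closed ball
  have hcoord : ∀ p : EuclideanSpace ℝ (Fin 2), ‖p‖ ≤ 1 →
      -1 ≤ p 0 ∧ p 0 ≤ 1 ∧ p 0 ^ 2 + p 1 ^ 2 ≤ 1 := by
    intro p hp
    have h := coords_sq p
    have h2 : ‖p‖ ^ 2 ≤ 1 := by nlinarith [norm_nonneg p]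
    refine ⟨by nlinarith [sq_nonneg (p 1)], by nlinarith [sq_nonneg (p 1)], by linarith⟩
  -- convexity
  have hconc := Real.concaveOn_rpow hγ0.le hγ1
  have hconv : ConvexOn ℝ (Metric.closedBall (0 : EuclideanSpace ℝ (Fin 2)) 1)
      (fun p : EuclideanSpace ℝ (Fin 2) => -(1 + p 0) ^ γ) := by
    refine ⟨convex_closedBall _ _, ?_⟩
    intro x hx y hy a b ha hb hab
    rw [Metric.mem_closedBall, dist_zero_right] at hx hy
    have hx0 : -1 ≤ x 0 := (hcoord x hx).1
    have hy0 : -1 ≤ y 0 := (hcoord y hy).1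
    have key := hconc.2 (mem_Ici.2 (by linarith : (0:ℝ) ≤ 1 + x 0))
      (mem_Ici.2 (by linarith : (0:ℝ) ≤ 1 + y 0)) ha hb hab
    simp only [smul_eq_mul] at key
    have happ : (a • x + b • y) 0 = a * x 0 + b * y 0 := by
      simp [PiLp.add_apply, PiLp.smul_apply, smul_eq_mul]
    simp only [happ, smul_eq_mul]
    have harg : 1 + (a * x 0 + b * y 0) = a * (1 + x 0) + b * (1 + y 0) := by
      linear_combination (-1 : ℝ) * hab
    rw [harg]
    linarith [key]
  -- continuity
  have hcont : Continuous (fun p : EuclideanSpace ℝ (Fin 2) => -(1 + p 0) ^ γ) := by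
    have h0 : Continuous fun p : EuclideanSpace ℝ (Fin 2) => p 0 :=
      (EuclideanSpace.proj (0 : Fin 2) : EuclideanSpace ℝ (Fin 2) →L[ℝ] ℝ).continuous
    exact ((Real.continuous_rpow_const hγ0.le).comp (continuous_const.add h0)).neg
  refine ⟨hconv, hcont.continuousOn, ?_⟩
  intro p hp
  rw [Metric.mem_closedBall, dist_zero_right] at hp
  obtain ⟨hp0l, hp0r, hpsum⟩ := hcoord p hp
  set S := {r : ℝ | ∃ a b c : ℝ,
      (∀ q ∈ Metric.sphere (0 : EuclideanSpace ℝ (Fin 2)) 1,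
        a * q 0 + b * q 1 + c ≤ -(1 + q 0) ^ γ) ∧
      r = a * p 0 + b * p 1 + c} with hSdef
  -- the tangent lines are admissible affine functions
  have htmem : ∀ t : ℝ, -1 < t →
      (-(γ * (1 + t) ^ (γ - 1))) * p 0 + 0 * p 1 + (-(1 + t) ^ γ + γ * (1 + t) ^ (γ - 1) * t)
        ∈ S := by
    intro t ht
    refine ⟨-(γ * (1 + t) ^ (γ - 1)), 0, -(1 + t) ^ γ + γ * (1 + t) ^ (γ - 1) * t, ?_, rfl⟩
    intro q hq
    rw [mem_sphere_iff_norm, sub_zero] at hq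
    have hq0 : -1 ≤ q 0 := (hcoord q hq.le).1
    have hti := tangent_ineq hγ0 hγ1 ht hq0
    nlinarith [hti]
  -- upper bound
  have hub : ∀ r ∈ S, r ≤ -(1 + p 0) ^ γ := by
    rintro r ⟨a, b, c, hqle, rfl⟩
    set s := Real.sqrt (1 - p 0 ^ 2) with hs
    have hs0 : 0 ≤ s := Real.sqrt_nonneg _
    have hssq : s ^ 2 = 1 - p 0 ^ 2 := Real.sq_sqrt (by nlinarith [sq_nonneg (p 1)])
    have mkmem : ∀ y : ℝ, p 0 ^ 2 + y ^ 2 = 1 →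
        ((WithLp.equiv 2 (Fin 2 → ℝ)).symm ![p 0, y])
          ∈ Metric.sphere (0 : EuclideanSpace ℝ (Fin 2)) 1 := by
      intro y hy
      rw [mem_sphere_iff_norm, sub_zero, EuclideanSpace.norm_eq]
      simp only [WithLp.equiv_symm_apply, PiLp.toLp_apply, Fin.sum_univ_two, Matrix.cons_val_zero,
        Matrix.cons_val_one, Matrix.head_cons, Real.norm_eq_abs, sq_abs]
      rw [hy]
      exact Real.sqrt_one
    have h1 := hqle _ (mkmem s (by nlinarith))
    have h2 := hqle _ (mkmem (-s) (by nlinarith))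
    simp only [WithLp.equiv_symm_apply, PiLp.toLp_apply, Matrix.cons_val_zero, Matrix.cons_val_one,
      Matrix.head_cons] at h1 h2
    have hy1 : p 1 ≤ s := by nlinarith
    have hy2 : -s ≤ p 1 := by nlinarith
    rcases le_total 0 b with hb | hb
    · nlinarith [mul_le_mul_of_nonneg_left hy1 hb]
    · nlinarith [mul_le_mul_of_nonpos_left hy2 hb]
  have hne : S.Nonempty := ⟨_, htmem 0 (by norm_num)⟩
  have hbdd : BddAbove S := ⟨_, hub⟩
  refine le_antisymm ?_ (csSup_le hne hub)
  rcases lt_or_eq_of_le hp0l with hgt | heq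
  · -- interior in x: the tangent at p 0 itself attains the value
    have hmem := htmem (p 0) hgt
    have hval : (-(γ * (1 + p 0) ^ (γ - 1))) * p 0 + 0 * p 1
        + (-(1 + p 0) ^ γ + γ * (1 + p 0) ^ (γ - 1) * (p 0)) = -(1 + p 0) ^ γ := by ring
    rw [hval] at hmem
    exact le_csSup hbdd hmem
  · -- p 0 = -1
    have hval : -(1 + p 0) ^ γ = 0 := by
      rw [← heq]
      norm_num [Real.zero_rpow hγ0.ne']
    rw [hval]
    refine (le_csSup_iff hbdd hne).2 ?_
    intro ub hub'
    have key : ∀ t : ℝ, -1 < t → (γ - 1) * (1 + t) ^ γ ≤ ub := by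
      intro t ht
      have h := hub' (htmem t ht)
      rw [← heq] at h
      have h1t : (0:ℝ) < 1 + t := by linarith
      have hrw : γ * ((1 + t) ^ (γ - 1) * (1 + t)) = γ * (1 + t) ^ γ := by
        rw [Real.rpow_sub h1t, Real.rpow_one, div_mul_cancel₀ _ h1t.ne']
      nlinarith [h, hrw]
    have hlim : Filter.Tendsto (fun t : ℝ => (γ - 1) * (1 + t) ^ γ)
        (nhdsWithin (-1) (Set.Ioi (-1))) (nhds 0) := by
      have hc : ContinuousAt (fun t : ℝ => (γ - 1) * (1 + t) ^ γ) (-1) := by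
        exact continuousAt_const.mul
          (((Real.continuous_rpow_const hγ0.le).comp (continuous_const.add continuous_id)).continuousAt)
      have h0 : (fun t : ℝ => (γ - 1) * (1 + t) ^ γ) (-1) = 0 := by
        norm_num [Real.zero_rpow hγ0.ne']
      rw [← h0]
      exact hc.continuousWithinAt
    exact le_of_tendsto hlim
      (Filter.eventually_of_mem self_mem_nhdsWithin fun t ht => key t ht)
end
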